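/- arXiv:2510.13801 — 7 statements merged into one kernel-verified Lean document; each statement's English description precedes it below -/
import Mathlib

section
/- Let Σ be a finite-dimensional complex vector space with a positive-definite Hermitian inner product S, and let E be a nonzero endomorphism of Σ satisfying E ∘ E = Tr(E) · E and (κ̄E)† = κ̄E for some unit complex number κ. Then Tr(E) ≠ 0. -/
/-- Let `W` be a finite-dimensional complex vector space with a
positive-definite Hermitian inner product `S`, and let `E` be a nonzero endomorphism of
`W` satisfying `E ∘ E = Tr (E) • E` and such that `κ̄ • E` is self-adjoint with respect
to `S` (i.e. `(κ̄ E)† = κ̄ E`) for some unit complex number `κ`.  Then `Tr (E) ≠ 0`. -/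
theorem trace_ne_zero_of_idempotent_selfAdjoint
    {W : Type*} [AddCommGroup W] [Module ℂ W] [FiniteDimensional ℂ W]
    (S : W → W → ℂ)
    (hS_add : ∀ x y z : W, S (x + y) z = S x z + S y z)
    (hS_smul : ∀ (c : ℂ) (x y : W), S (c • x) y = c * S x y)
    (hS_smul' : ∀ (c : ℂ) (x y : W), S x (c • y) = starRingEnd ℂ c * S x y)
    (hS_herm : ∀ x y : W, S x y = starRingEnd ℂ (S y x))
    (hS_pos : ∀ x : W, x ≠ 0 → 0 < (S x x).re)
    (E : W →ₗ[ℂ] W) (hE_ne : E ≠ 0)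
    (hE_sq : E ∘ₗ E = LinearMap.trace ℂ W E • E)
    (κ : ℂ) (hκ : ‖κ‖ = 1)
    (hSA : ∀ x y : W, S ((starRingEnd ℂ κ • E) x) y = S x ((starRingEnd ℂ κ • E) y)) :
    LinearMap.trace ℂ W E ≠ 0 := by
  intro h
  have hE2 : E ∘ₗ E = 0 := by rw [hE_sq, h, zero_smul]
  apply hE_ne
  ext x
  simp only [LinearMap.zero_apply]
  by_contra hx
  have hk : starRingEnd ℂ κ ≠ 0 := by
    simp only [ne_eq, map_eq_zero]
    intro hk0; rw [hk0] at hκ; simp at hκ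
  have hEE : E (E x) = 0 := by
    have := congrFun (congrArg DFunLike.coe hE2) x
    simpa using this
  have hz : S x (0 : W) = 0 := by
    have := hS_smul' 0 x (0 : W)
    simpa using this
  have key := hSA x (E x)
  simp only [LinearMap.smul_apply] at key
  rw [hS_smul, hEE, smul_zero, hz] at key
  have h0 : S (E x) (E x) = 0 :=
    (mul_eq_zero.mp key).resolve_left hk
  have := hS_pos (E x) hx
  rw [h0] at this
  simp at this
end

section
/- Let Σ be a finite-dimensional complex vector space with a non-degenerate complex-bilinear pairing B of symmetry type σ, and let E be a nonzero endomorphism of Σ. Then E has the form E(χ) = B(χ, ξ) · ξ for some ξ ∈ Σ if and only if E ∘ A ∘ E = Tr(E ∘ A) · E for all endomorphisms A, and E^t = σ E. -/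
open LinearMap

/-- Trace of a rank-one map `x ↦ f x • v` is `f v`. -/
lemma trace_rank_one {W : Type*} [AddCommGroup W] [Module ℂ W] [FiniteDimensional ℂ W]
    (f : W →ₗ[ℂ] ℂ) (v : W) :
    LinearMap.trace ℂ W (f.smulRight v) = f v := by
  have h : f.smulRight v = dualTensorHom ℂ W W (f ⊗ₜ v) := by
    ext x; simp [dualTensorHom_apply]
  rw [h, trace_eq_contract_apply]
  simp

/-- Let `W` be a finite-dimensional complex vector space with a
non-degenerate complex-bilinear pairing `B` of symmetry type `σ`, and let `E` be a
nonzero endomorphism of `W`.  Then `E` has the form `E (χ) = B (χ, ξ) • ξ` for some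
`ξ ∈ W` if and only if `E ∘ A ∘ E = Tr (E ∘ A) • E` for all endomorphisms `A` and
`E^t = σ • E` (expressed as `σ * B (E x, y) = B (x, E y)` for all `x, y`). -/
theorem bilinear_square_characterization
    {W : Type*} [AddCommGroup W] [Module ℂ W] [FiniteDimensional ℂ W]
    (B : W → W → ℂ)
    (hB_add₁ : ∀ x y z : W, B (x + y) z = B x z + B y z)
    (hB_smul₁ : ∀ (c : ℂ) (x y : W), B (c • x) y = c * B x y)
    (hB_add₂ : ∀ x y z : W, B x (y + z) = B x y + B x z)
    (hB_smul₂ : ∀ (c : ℂ) (x y : W), B x (c • y) = c * B x y)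
    (σ : ℂ) (hσ : σ = 1 ∨ σ = -1)
    (hB_symm : ∀ x y : W, B x y = σ * B y x)
    (hB_nondeg : ∀ x : W, (∀ y : W, B x y = 0) → x = 0)
    (E : W →ₗ[ℂ] W) (hE_ne : E ≠ 0) :
    (∃ ξ : W, ∀ χ : W, E χ = B χ ξ • ξ) ↔
      ((∀ A : W →ₗ[ℂ] W, E ∘ₗ A ∘ₗ E = LinearMap.trace ℂ W (E ∘ₗ A) • E) ∧
        ∀ x y : W, σ * B (E x) y = B x (E y)) := by
  have hσ0 : σ ≠ 0 := by rcases hσ with h | h <;> simp [h]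
  -- the functional `x ↦ B x y` as a linear map
  set φ : W → (W →ₗ[ℂ] ℂ) := fun y =>
    { toFun := fun x => B x y
      map_add' := fun a b => hB_add₁ a b y
      map_smul' := fun c a => hB_smul₁ c a y } with hφ
  constructor
  · rintro ⟨ξ, hξ⟩
    constructor
    · intro A
      have htr : LinearMap.trace ℂ W (E ∘ₗ A) = B (A ξ) ξ := by
        have hEA : E ∘ₗ A = ((φ ξ).comp A).smulRight ξ := by
          ext χ; simp [hξ, hφ]
        rw [hEA, trace_rank_one]; simp [hφ]
      rw [htr]
      ext χ
      simp only [comp_apply, LinearMap.smul_apply]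
      rw [hξ χ, map_smul, map_smul, hξ (A ξ)]
      exact smul_comm _ _ _
    · intro x y
      rw [hξ x, hξ y, hB_smul₁, hB_smul₂]
      have := hB_symm y ξ
      have h2 := hB_symm ξ y
      calc σ * (B x ξ * B ξ y) = B x ξ * (σ * B ξ y) := by ring
        _ = B x ξ * B y ξ := by rw [← hB_symm y ξ]
        _ = B y ξ * B x ξ := by ring
  · rintro ⟨hTr, hSym⟩
    -- find χ₀ with E χ₀ ≠ 0
    have hex : ∃ χ₀ : W, E χ₀ ≠ 0 := by
      by_contra h
      push_neg at h
      exact hE_ne (LinearMap.ext fun x => by simp [h x])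
    obtain ⟨χ₀, hχ₀⟩ := hex
    set v : W := E χ₀ with hv
    obtain ⟨y₁, hy₁⟩ : ∃ y₁ : W, B v y₁ ≠ 0 := by
      by_contra h
      push_neg at h
      exact hχ₀ (hB_nondeg v h)
    -- rank one: every E w is a multiple of v
    have hrank : ∀ w : W, ∃ a : ℂ, E w = a • v := by
      intro w
      have h := congrArg (fun f : W →ₗ[ℂ] W => f χ₀) (hTr ((φ y₁).smulRight w))
      simp only [comp_apply, LinearMap.smul_apply, smulRight_apply] at h
      have h' : B v y₁ • E w = LinearMap.trace ℂ W (E ∘ₗ (φ y₁).smulRight w) • v := by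
        simpa [hφ, map_smul] using h
      refine ⟨(B v y₁)⁻¹ * LinearMap.trace ℂ W (E ∘ₗ (φ y₁).smulRight w), ?_⟩
      calc E w = (B v y₁)⁻¹ • (B v y₁ • E w) := by
            rw [smul_smul, inv_mul_cancel₀ hy₁, one_smul]
        _ = _ := by rw [h', smul_smul]
    choose g hg using hrank
    -- use the symmetry to identify g
    have hgB : ∀ x : W, g x = (g y₁ / (σ * B v y₁)) * B x v := by
      intro x
      have h := hSym x y₁
      rw [hg x, hg y₁, hB_smul₁, hB_smul₂] at h
      field_simp
      calc g x * σ * B v y₁ = σ * (g x * B v y₁) := by ring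
        _ = g y₁ * B x v := h
    set c : ℂ := g y₁ / (σ * B v y₁) with hc
    have hE : ∀ x : W, E x = (c * B x v) • v := by
      intro x; rw [hg x, hgB x]
    have hcne : c ≠ 0 := by
      intro h0
      exact hE_ne (LinearMap.ext fun x => by simp [hE x, h0])
    -- take a square root of c
    set t : ℂ := c ^ ((2 : ℕ) : ℂ)⁻¹ with ht
    have ht2 : t ^ 2 = c := Complex.cpow_nat_inv_pow c (by norm_num)
    refine ⟨t • v, fun χ => ?_⟩
    rw [hE χ, hB_smul₂, smul_smul]
    congr 1
    calc c * B χ v = t ^ 2 * B χ v := by rw [ht2]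
      _ = t * B χ v * t := by ring
end

section
/- Let (V, h) be a real quadratic vector space of even dimension d with an orthonormal basis e¹, …, e^d, and let γ : Cl(V*, h*) ⊗ ℂ → End(Σ) be an irreducible complex Clifford module, so that the induced map Ψ_γ from the complexified exterior algebra (with the geometric product ⋄) to End(Σ) is an algebra isomorphism. Then the Kähler-Atiyah trace T(α) := Tr(Ψ_γ(α)) satisfies T(α) = 2^{d/2} · α⁽⁰⁾, where α⁽⁰⁾ denotes the degree-zero component of α. -/
open CliffordAlgebra

section ListLemmas

variable {α : Type*}

lemma auxKA_first_occ {a : α} : ∀ {t : List α}, a ∈ t → ∃ q r, t = q ++ a :: r ∧ a ∉ q := by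
  intro t ht
  induction t with
  | nil => simp at ht
  | cons x s IH =>
    by_cases hx : a = x
    · exact ⟨[], s, by simp [hx], by simp⟩
    · have hs : a ∈ s := by
        rcases List.mem_cons.mp ht with h | h
        · exact absurd h hx
        · exact h
      obtain ⟨q, r, h1, h2⟩ := IH hs
      exact ⟨x :: q, r, by simp [h1], by simp [hx, h2]⟩

lemma auxKA_dup_decomp : ∀ (l : List α), ¬l.Nodup →
    ∃ p a q r, l = p ++ a :: (q ++ a :: r) ∧ a ∉ q := by
  intro l
  induction l with
  | nil => intro h; exact absurd List.nodup_nil h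
  | cons x t IH =>
    intro h
    by_cases hx : x ∈ t
    · obtain ⟨q, r, h1, h2⟩ := auxKA_first_occ hx
      exact ⟨[], x, q, r, by simp [h1], h2⟩
    · have ht : ¬t.Nodup := fun hn => h (List.nodup_cons.mpr ⟨hx, hn⟩)
      obtain ⟨p, a, q, r, h1, h2⟩ := IH ht
      exact ⟨x :: p, a, q, r, by simp [h1], h2⟩

end ListLemmas

section CliffordAux

variable {V : Type*} [AddCommGroup V] [Module ℂ V] (Q : QuadraticForm ℂ V)

lemma auxKA_anticomm (a : V) :
    ∀ (l : List V), (∀ x ∈ l, QuadraticMap.polar Q a x = 0) →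
      ι Q a * (l.map (⇑(ι Q))).prod
        = ((-1 : ℂ) ^ l.length) • ((l.map (⇑(ι Q))).prod * ι Q a) := by
  intro l
  induction l with
  | nil => simp
  | cons x t IH =>
    intro h
    have hax : ι Q a * ι Q x = -(ι Q x * ι Q a) := by
      have h2 := ι_mul_ι_add_swap (Q := Q) a x
      rw [h x List.mem_cons_self, map_zero] at h2
      exact eq_neg_of_add_eq_zero_left h2
    have IH' := IH fun y hy => h y (List.mem_cons_of_mem _ hy)
    rw [List.map_cons, List.prod_cons, ← mul_assoc, hax, neg_mul, mul_assoc, IH',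
      mul_smul_comm, List.length_cons, ← neg_smul, mul_assoc]
    congr 1
    rw [pow_succ]
    ring

lemma auxKA_contract (f : Module.Dual ℂ V) :
    ∀ (l : List V), (∀ x ∈ l, f x = 0) →
      contractLeft (Q := (0 : QuadraticForm ℂ V)) f
        ((l.map (⇑(ι (0 : QuadraticForm ℂ V)))).prod) = 0 := by
  intro l
  induction l with
  | nil => intro _; simpa using contractLeft_one (0 : QuadraticForm ℂ V) f
  | cons x t IH =>
    intro h
    rw [List.map_cons, List.prod_cons, contractLeft_ι_mul, h x List.mem_cons_self,
      IH fun y hy => h y (List.mem_cons_of_mem _ hy), zero_smul, mul_zero, sub_zero]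

lemma auxKA_equivExterior_prod :
    ∀ (l : List V), (l.Pairwise fun x y => QuadraticMap.polar Q x y = 0) →
      equivExterior Q ((l.map (⇑(ι Q))).prod)
        = (l.map (⇑(ι (0 : QuadraticForm ℂ V)))).prod := by
  have key : ∀ y : CliffordAlgebra Q,
      equivExterior Q y = changeForm (changeForm.associated_neg_proof (Q := Q)) y := fun _ => rfl
  intro l
  induction l with
  | nil =>
    intro _
    simp only [List.map_nil, List.prod_nil, key]
    exact changeForm_one _
  | cons x t IH =>
    intro h
    obtain ⟨hx, ht⟩ := List.pairwise_cons.mp h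
    rw [List.map_cons, List.prod_cons, key, changeForm_ι_mul, ← key, IH ht,
      List.map_cons, List.prod_cons]
    have hf : ∀ y ∈ t, (QuadraticMap.associated (R := ℂ) (-Q)) x y = 0 := by
      intro y hy
      have hp := hx y hy
      unfold QuadraticMap.polar at hp
      have h0 : (-Q) (x + y) - (-Q) x - (-Q) y = 0 := by
        simp only [QuadraticMap.neg_apply]
        linear_combination -hp
      rw [QuadraticMap.associated_apply, h0, smul_zero]
    rw [auxKA_contract _ _ hf, sub_zero]

lemma auxKA_algebraMapInv_ι (v : V) :
    ExteriorAlgebra.algebraMapInv (ι (0 : QuadraticForm ℂ V) v) = 0 := by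
  show ExteriorAlgebra.algebraMapInv (ExteriorAlgebra.ι ℂ v) = 0
  simp [ExteriorAlgebra.algebraMapInv]

end CliffordAux

section TraceAux

lemma auxKA_trace_zero {Sp : Type*} [AddCommGroup Sp] [Module ℂ Sp] [FiniteDimensional ℂ Sp]
    (A U : Module.End ℂ Sp) (ε : ℂ) (hε : ε ≠ 0) (hU : U * U = ε • 1)
    (hc : U * A = -(A * U)) : LinearMap.trace ℂ Sp A = 0 := by
  have h1 : LinearMap.trace ℂ Sp (U * (A * U)) = LinearMap.trace ℂ Sp ((A * U) * U) :=
    LinearMap.trace_mul_comm ℂ U (A * U)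
  have h2 : (A * U) * U = ε • A := by
    rw [mul_assoc, hU, mul_smul_comm, mul_one]
  have h3 : U * (A * U) = -(ε • A) := by
    rw [← mul_assoc, hc, neg_mul, mul_assoc, hU, mul_smul_comm, mul_one]
  rw [h2, h3, map_neg, map_smul] at h1
  have h4 : ε * ((LinearMap.trace ℂ Sp) A + (LinearMap.trace ℂ Sp) A) = 0 := by
    have := h1
    simp only [smul_eq_mul] at this
    linear_combination -this
  rcases mul_eq_zero.mp h4 with h | h
  · exact absurd h hε
  · exact add_self_eq_zero.mp h

end TraceAux

section Main

variable {V Sp : Type*} [AddCommGroup V] [Module ℂ V]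
    [AddCommGroup Sp] [Module ℂ Sp] [FiniteDimensional ℂ Sp]

lemma auxKA_monomial
    (d : ℕ) (hd : Even d)
    (Q : QuadraticForm ℂ V) (b : Module.Basis (Fin d) ℂ V)
    (hb_norm : ∀ i, Q (b i) = 1 ∨ Q (b i) = -1)
    (hb_orth : ∀ i j, i ≠ j → QuadraticMap.polar Q (b i) (b j) = 0)
    (γ : CliffordAlgebra Q ≃ₐ[ℂ] Module.End ℂ Sp)
    (hdim : Module.finrank ℂ Sp = 2 ^ (d / 2)) (n : ℕ) :
    ∀ l : List (Fin d), l.length = n →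
      LinearMap.trace ℂ Sp (γ ((l.map b).map (⇑(ι Q))).prod) =
        2 ^ (d / 2) *
          ExteriorAlgebra.algebraMapInv (equivExterior Q ((l.map b).map (⇑(ι Q))).prod) := by
  induction n using Nat.strong_induction_on with
  | _ n IH =>
    intro l hl
    by_cases hnd : l.Nodup
    · -- nodup case
      have hpair : ((l.map b).Pairwise fun x y => QuadraticMap.polar Q x y = 0) := by
        rw [List.pairwise_map]
        exact hnd.imp (fun hij => hb_orth _ _ hij)
      rw [auxKA_equivExterior_prod Q _ hpair]
      match l, hnd, hpair with
      | [], _, _ =>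
        simp only [List.map_nil, List.prod_nil, map_one]
        rw [LinearMap.trace_one, hdim]
        push_cast
        ring
      | a :: t, hnd, hpair =>
        -- RHS is zero
        have hRHS : ExteriorAlgebra.algebraMapInv
            (((a :: t).map b).map (⇑(ι (0 : QuadraticForm ℂ V)))).prod = 0 := by
          rw [List.map_cons, List.map_cons, List.prod_cons, map_mul, auxKA_algebraMapInv_ι,
            zero_mul]
        rw [hRHS, mul_zero]
        -- LHS is zero
        obtain ⟨ha, hat⟩ := List.nodup_cons.mp hnd
        set L : CliffordAlgebra Q := (((a :: t).map b).map (⇑(ι Q))).prod with hL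
        have hLcons : L = ι Q (b a) * ((t.map b).map (⇑(ι Q))).prod := by
          rw [hL, List.map_cons, List.map_cons, List.prod_cons]
        have key : ∃ j : Fin d, ι Q (b j) * L = -(L * ι Q (b j)) ∧ Q (b j) ≠ 0 := by
          have hnorm : ∀ j : Fin d, Q (b j) ≠ 0 := by
            intro j
            rcases hb_norm j with h | h <;> rw [h] <;> norm_num
          by_cases hev : Even (a :: t).length
          · -- even length: use j = a, t has odd length
            refine ⟨a, ?_, hnorm a⟩
            have htodd : Odd t.length := by
              simpa [Nat.even_add_one, Nat.odd_iff, Nat.even_iff] using hev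
            have hA := auxKA_anticomm Q (b a) (t.map b) (by
              intro x hx
              obtain ⟨j, hj, rfl⟩ := List.mem_map.mp hx
              exact hb_orth a j (fun h => ha (h ▸ hj)))
            rw [List.length_map, Odd.neg_one_pow htodd, neg_smul, one_smul] at hA
            -- hA : ι (b a) * Pt = -(Pt * ι (b a))
            set Pt : CliffordAlgebra Q := ((t.map b).map (⇑(ι Q))).prod with hPt
            have h1 : ι Q (b a) * L = (Q (b a)) • Pt := by
              rw [hLcons, ← mul_assoc, ι_sq_scalar, Algebra.smul_def]
            have h2 : L * ι Q (b a) = -((Q (b a)) • Pt) := by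
              rw [hLcons, mul_assoc]
              have hPtι : Pt * ι Q (b a) = -(ι Q (b a) * Pt) := by
                rw [hA, neg_neg]
              rw [hPtι, mul_neg, ← mul_assoc, ι_sq_scalar, Algebra.smul_def]
            rw [h1, h2, neg_neg]
          · -- odd length: find j ∉ a :: t
            have hlen_le : (a :: t).length ≤ d := by
              simpa using hnd.length_le_card
            have hlen_ne : (a :: t).length ≠ d := by
              intro h
              exact hev (by rw [h]; exact hd)
            have hlen_lt : (a :: t).length < d := lt_of_le_of_ne hlen_le hlen_ne
            have hexists : ∃ j : Fin d, j ∉ a :: t := by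
              by_contra hall
              push_neg at hall
              have huniv : (a :: t).toFinset = Finset.univ :=
                Finset.eq_univ_iff_forall.mpr fun j => List.mem_toFinset.mpr (hall j)
              have := List.toFinset_card_le (a :: t)
              rw [huniv, Finset.card_univ, Fintype.card_fin] at this
              omega
            obtain ⟨j, hj⟩ := hexists
            refine ⟨j, ?_, hnorm j⟩
            have hA := auxKA_anticomm Q (b j) ((a :: t).map b) (by
              intro x hx
              obtain ⟨i, hi, rfl⟩ := List.mem_map.mp hx
              exact hb_orth j i (fun h => hj (h ▸ hi)))
            have hodd : Odd (a :: t).length := Nat.not_even_iff_odd.mp hev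
            rw [List.length_map, Odd.neg_one_pow hodd, neg_smul, one_smul] at hA
            exact hA
        obtain ⟨j, hkey, hε⟩ := key
        refine auxKA_trace_zero (γ L) (γ (ι Q (b j))) (Q (b j)) hε ?_ ?_
        · rw [← map_mul, ι_sq_scalar, AlgEquiv.commutes, Algebra.algebraMap_eq_smul_one]
        · rw [← map_mul, hkey, map_neg, map_mul]
    · -- duplicate case
      obtain ⟨p, a, q, r, hldec, haq⟩ := auxKA_dup_decomp l hnd
      have hprod : ∀ l₁ l₂ : List (Fin d),
          (((l₁ ++ l₂).map b).map (⇑(ι Q))).prod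
            = ((l₁.map b).map (⇑(ι Q))).prod * ((l₂.map b).map (⇑(ι Q))).prod := by
        intro l₁ l₂
        rw [List.map_append, List.map_append, List.prod_append]
      have hA := auxKA_anticomm Q (b a) (q.map b) (by
        intro x hx
        obtain ⟨i, hi, rfl⟩ := List.mem_map.mp hx
        exact hb_orth a i (fun h => haq (h ▸ hi)))
      rw [List.length_map] at hA
      set Pq : CliffordAlgebra Q := ((q.map b).map (⇑(ι Q))).prod with hPq
      set Pp : CliffordAlgebra Q := ((p.map b).map (⇑(ι Q))).prod with hPp
      set Pr : CliffordAlgebra Q := ((r.map b).map (⇑(ι Q))).prod with hPr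
      set c : ℂ := ((-1 : ℂ) ^ q.length) * Q (b a) with hc
      have hred : ((l.map b).map (⇑(ι Q))).prod
          = c • (((p ++ (q ++ r)).map b).map (⇑(ι Q))).prod := by
        rw [hldec]
        have h1 : (((p ++ a :: (q ++ a :: r)).map b).map (⇑(ι Q))).prod
            = Pp * (ι Q (b a) * (Pq * (ι Q (b a) * Pr))) := by
          rw [hprod p (a :: (q ++ a :: r)), List.map_cons, List.map_cons, List.prod_cons,
            hprod q (a :: r), List.map_cons, List.map_cons, List.prod_cons]
        have h2 : (((p ++ (q ++ r)).map b).map (⇑(ι Q))).prod = Pp * (Pq * Pr) := by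
          rw [hprod p (q ++ r), hprod q r]
        rw [h1, h2]
        have h3 : ι Q (b a) * (Pq * (ι Q (b a) * Pr))
            = c • (Pq * Pr) := by
          have e1 : ι Q (b a) * (Pq * (ι Q (b a) * Pr))
              = (ι Q (b a) * Pq) * (ι Q (b a) * Pr) := by
            rw [mul_assoc]
          rw [e1, hA, smul_mul_assoc]
          have e2 : Pq * (ι Q (b a)) * (ι Q (b a) * Pr) = Q (b a) • (Pq * Pr) := by
            rw [mul_assoc Pq, ← mul_assoc (ι Q (b a)) (ι Q (b a)) Pr, ι_sq_scalar,
              ← Algebra.smul_def, mul_smul_comm]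
          rw [e2, smul_smul, ← hc]
        rw [h3, mul_smul_comm]
      have hlen : (p ++ (q ++ r)).length < n := by
        subst hl
        rw [hldec]
        simp only [List.length_append, List.length_cons]
        omega
      rw [hred, map_smul, map_smul, map_smul, map_smul, smul_eq_mul, smul_eq_mul,
        IH _ hlen _ rfl]
      ring

end Main

/-- Let `(V, h)` be a quadratic vector space of even dimension `d`
(here modelled by a complex vector space `V` with a quadratic form `Q`, the
complexification of `h*`, admitting an orthonormal basis with `Q (bᵢ) = ±1`), and let
`γ : ℂl (V*, h*) ≃ End (Σ)` be an irreducible complex Clifford module, with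
`dim Σ = 2 ^ (d/2)`.  Then the Kähler–Atiyah trace `T (α) = Tr (Ψ_γ (α))`, where
`Ψ_γ = γ ∘ Ψ` and `Ψ` is the Chevalley–Riesz isomorphism from the exterior algebra to
the Clifford algebra, satisfies `T (α) = 2 ^ (d/2) · α⁽⁰⁾`, with `α⁽⁰⁾` the degree-zero
component of `α`. -/
theorem kahlerAtiyah_trace_eq
    {V Sp : Type*} [AddCommGroup V] [Module ℂ V]
    [AddCommGroup Sp] [Module ℂ Sp] [FiniteDimensional ℂ Sp]
    (d : ℕ) (hd : Even d)
    (Q : QuadraticForm ℂ V) (b : Module.Basis (Fin d) ℂ V)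
    (hb_norm : ∀ i, Q (b i) = 1 ∨ Q (b i) = -1)
    (hb_orth : ∀ i j, i ≠ j → QuadraticMap.polar Q (b i) (b j) = 0)
    (γ : CliffordAlgebra Q ≃ₐ[ℂ] Module.End ℂ Sp)
    (hdim : Module.finrank ℂ Sp = 2 ^ (d / 2)) :
    ∀ α : ExteriorAlgebra ℂ V,
      LinearMap.trace ℂ Sp (γ ((CliffordAlgebra.equivExterior Q).symm α)) =
        2 ^ (d / 2) * ExteriorAlgebra.algebraMapInv α := by
  intro α
  obtain ⟨x, rfl⟩ : ∃ x, α = equivExterior Q x :=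
    ⟨(equivExterior Q).symm α, ((equivExterior Q).apply_symm_apply α).symm⟩
  rw [LinearEquiv.symm_apply_apply]
  -- span argument
  set S : Submodule ℂ (CliffordAlgebra Q) :=
    Submodule.span ℂ (Set.range fun l : List (Fin d) => ((l.map b).map (⇑(ι Q))).prod) with hS
  have hmono : ∀ l : List (Fin d), ((l.map b).map (⇑(ι Q))).prod ∈ S :=
    fun l => Submodule.subset_span ⟨l, rfl⟩
  have hmul : ∀ x ∈ S, ∀ y ∈ S, x * y ∈ S := by
    intro x hx
    refine Submodule.span_induction (p := fun x _ => ∀ y ∈ S, x * y ∈ S) ?_ ?_ ?_ ?_ hx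
    · rintro _ ⟨l₁, rfl⟩ y hy
      refine Submodule.span_induction (p := fun y _ =>
        ((l₁.map b).map (⇑(ι Q))).prod * y ∈ S) ?_ ?_ ?_ ?_ hy
      · rintro _ ⟨l₂, rfl⟩
        have : ((l₁.map b).map (⇑(ι Q))).prod * ((l₂.map b).map (⇑(ι Q))).prod
            = (((l₁ ++ l₂).map b).map (⇑(ι Q))).prod := by
          rw [List.map_append, List.map_append, List.prod_append]
        rw [this]
        exact hmono _
      · show ((l₁.map b).map (⇑(ι Q))).prod * 0 ∈ S
        rw [mul_zero]; exact S.zero_mem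
      · intro u v _ _ hu hv
        show ((l₁.map b).map (⇑(ι Q))).prod * (u + v) ∈ S
        rw [mul_add]; exact S.add_mem hu hv
      · intro c u _ hu
        show ((l₁.map b).map (⇑(ι Q))).prod * (c • u) ∈ S
        rw [mul_smul_comm]; exact S.smul_mem c hu
    · intro y hy
      show (0 : CliffordAlgebra Q) * y ∈ S
      rw [zero_mul]; exact S.zero_mem
    · intro u v _ _ hu hv y hy
      show (u + v) * y ∈ S
      rw [add_mul]; exact S.add_mem (hu y hy) (hv y hy)
    · intro c u _ hu y hy
      show (c • u) * y ∈ S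
      rw [smul_mul_assoc]; exact S.smul_mem c (hu y hy)
  have hone : (1 : CliffordAlgebra Q) ∈ S := by
    have : (1 : CliffordAlgebra Q) = ((([] : List (Fin d)).map b).map (⇑(ι Q))).prod := by simp
    rw [this]; exact hmono []
  have hι : ∀ v : V, ι Q v ∈ S := by
    intro v
    have hv : v ∈ Submodule.span ℂ (Set.range b) := by
      rw [b.span_eq]; trivial
    have hle : Submodule.span ℂ (Set.range b) ≤ Submodule.comap (ι Q) S := by
      rw [Submodule.span_le]
      rintro _ ⟨i, rfl⟩
      show ι Q (b i) ∈ S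
      have : ι Q (b i) = ((([i] : List (Fin d)).map b).map (⇑(ι Q))).prod := by simp
      rw [this]; exact hmono [i]
    exact hle hv
  have hxS : x ∈ S := by
    induction x using CliffordAlgebra.induction with
    | algebraMap r =>
      rw [Algebra.algebraMap_eq_smul_one]
      exact S.smul_mem r hone
    | ι v => exact hι v
    | mul u v hu hv => exact hmul u hu v hv
    | add u v hu hv => exact S.add_mem hu hv
  refine Submodule.span_induction (p := fun y _ =>
    LinearMap.trace ℂ Sp (γ y) = 2 ^ (d / 2) *
      ExteriorAlgebra.algebraMapInv (equivExterior Q y)) ?_ ?_ ?_ ?_ hxS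
  · rintro _ ⟨l, rfl⟩
    exact auxKA_monomial d hd Q b hb_norm hb_orth γ hdim l.length l rfl
  · simp
  · intro u v _ _ hu hv
    rw [map_add, map_add, map_add, map_add, hu, hv]
    ring
  · intro c u _ hu
    rw [map_smul, map_smul, map_smul, map_smul, smul_eq_mul, smul_eq_mul, hu]
    ring
end

section
/- Let (V, h) be a 4-dimensional oriented Euclidean vector space and let θ₁, θ₂ ∈ V* ⊗ ℂ be complex one-forms with ω = θ₁ ∧ θ₂ ≠ 0 satisfying ⟨θ₁, θ₁⟩ = ⟨θ₂, θ₂⟩ = ⟨θ₁, θ₂⟩ = 0, where ⟨·,·⟩ is the ℂ-bilinear extension of h*. Then the four real one-forms Re θ₁, Im θ₁, Re θ₂, Im θ₂ are linearly independent, provided ⟨ω, ω̄⟩ ≠ 0. -/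
open Complex

/-- The ℂ-bilinear extension of the Euclidean metric to complex one-forms on `ℝ⁴`
(components in an orthonormal basis). -/
noncomputable def cbil4 (x y : Fin 4 → ℂ) : ℂ := ∑ i, x i * y i

/-- Let `(V, h)` be a 4-dimensional oriented Euclidean vector space
(modelled in an orthonormal basis) and `θ₁, θ₂` complex one-forms with
`ω = θ₁ ∧ θ₂ ≠ 0` (i.e. `θ₁, θ₂` are ℂ-linearly independent), satisfying
`⟨θ₁, θ₁⟩ = ⟨θ₂, θ₂⟩ = ⟨θ₁, θ₂⟩ = 0` for the ℂ-bilinear pairing `⟨·,·⟩`.  Then the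
four real one-forms `Re θ₁, Im θ₁, Re θ₂, Im θ₂` are linearly independent, provided
`⟨ω, ω̄⟩ = ⟨θ₁, θ̄₁⟩⟨θ₂, θ̄₂⟩ − ⟨θ₁, θ̄₂⟩⟨θ₂, θ̄₁⟩ ≠ 0`. -/
theorem re_im_linearIndependent_of_isotropic_pair
    (θ₁ θ₂ : Fin 4 → ℂ)
    (hω : LinearIndependent ℂ ![θ₁, θ₂])
    (h11 : cbil4 θ₁ θ₁ = 0) (h22 : cbil4 θ₂ θ₂ = 0) (h12 : cbil4 θ₁ θ₂ = 0)
    (hωω : cbil4 θ₁ (fun i => starRingEnd ℂ (θ₁ i)) *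
          cbil4 θ₂ (fun i => starRingEnd ℂ (θ₂ i)) -
        cbil4 θ₁ (fun i => starRingEnd ℂ (θ₂ i)) *
          cbil4 θ₂ (fun i => starRingEnd ℂ (θ₁ i)) ≠ 0) :
    LinearIndependent ℝ
      ![fun i => (θ₁ i).re, fun i => (θ₁ i).im,
        fun i => (θ₂ i).re, fun i => (θ₂ i).im] := by
  rw [Fintype.linearIndependent_iff]
  intro g hg
  set A := cbil4 θ₁ (fun i => starRingEnd ℂ (θ₁ i)) with hA
  set B := cbil4 θ₁ (fun i => starRingEnd ℂ (θ₂ i)) with hB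
  set C := cbil4 θ₂ (fun i => starRingEnd ℂ (θ₁ i)) with hC'
  set D := cbil4 θ₂ (fun i => starRingEnd ℂ (θ₂ i)) with hD
  have h21 : cbil4 θ₂ θ₁ = 0 := by
    rw [← h12]; unfold cbil4; exact Finset.sum_congr rfl fun i _ => mul_comm _ _
  set α : ℂ := (g 0 : ℂ) - g 1 * I with hα
  set β : ℂ := (g 0 : ℂ) + g 1 * I with hβ
  set γ : ℂ := (g 2 : ℂ) - g 3 * I with hγ
  set δ : ℂ := (g 2 : ℂ) + g 3 * I with hδ
  have hE : ∀ j, g 0 * (θ₁ j).re + g 1 * (θ₁ j).im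
      + g 2 * (θ₂ j).re + g 3 * (θ₂ j).im = 0 := by
    intro j
    have := congrFun hg j
    simpa [Fin.sum_univ_four, Matrix.cons_val_zero, Matrix.cons_val_one] using this
  have hCeq : ∀ j, α * θ₁ j + β * (starRingEnd ℂ (θ₁ j))
      + γ * θ₂ j + δ * (starRingEnd ℂ (θ₂ j)) = 0 := by
    intro j
    have := hE j
    apply Complex.ext <;>
      simp [hα, hβ, hγ, hδ, Complex.add_re, Complex.add_im, mul_re, mul_im] <;>
      ring_nf <;> nlinarith [this]
  have key : ∀ (x : Fin 4 → ℂ),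
      (∑ j, x j * (α * θ₁ j + β * (starRingEnd ℂ (θ₁ j))
        + γ * θ₂ j + δ * (starRingEnd ℂ (θ₂ j)))) =
      α * cbil4 x θ₁ + β * cbil4 x (fun i => starRingEnd ℂ (θ₁ i))
        + γ * cbil4 x θ₂ + δ * cbil4 x (fun i => starRingEnd ℂ (θ₂ i)) := by
    intro x
    simp only [cbil4, Finset.mul_sum, ← Finset.sum_add_distrib]
    exact Finset.sum_congr rfl fun j _ => by ring
  have hz : ∀ (x : Fin 4 → ℂ),
      (∑ j, x j * (α * θ₁ j + β * (starRingEnd ℂ (θ₁ j))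
        + γ * θ₂ j + δ * (starRingEnd ℂ (θ₂ j)))) = 0 := by
    intro x; exact Finset.sum_eq_zero fun j _ => by rw [hCeq j, mul_zero]
  have hs12 : cbil4 θ₁ θ₂ = cbil4 θ₂ θ₁ := by
    unfold cbil4; exact Finset.sum_congr rfl fun i _ => mul_comm _ _
  have e1 : β * A + δ * B = 0 := by
    have := (key θ₁).symm.trans (hz θ₁)
    rw [h11, h12, ← hA, ← hB] at this
    linear_combination this
  have e2 : β * C + δ * D = 0 := by
    have := (key θ₂).symm.trans (hz θ₂)
    rw [h21, h22, ← hC', ← hD] at this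
    linear_combination this
  have hβ0 : β = 0 := by
    have hb : β * (A * D - B * C) = 0 := by linear_combination D * e1 - B * e2
    rcases mul_eq_zero.1 hb with h | h
    · exact h
    · exact absurd h hωω
  have hδ0 : δ = 0 := by
    have hd : δ * (A * D - B * C) = 0 := by linear_combination A * e2 - C * e1
    rcases mul_eq_zero.1 hd with h | h
    · exact h
    · exact absurd h hωω
  have hg0 : g 0 = 0 ∧ g 1 = 0 := by
    have := Complex.ext_iff.1 hβ0
    simpa [hβ] using this
  have hg2 : g 2 = 0 ∧ g 3 = 0 := by
    have := Complex.ext_iff.1 hδ0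
    simpa [hδ] using this
  intro i
  fin_cases i
  · exact hg0.1
  · exact hg0.2
  · exact hg2.1
  · exact hg2.2
end

section
/- Let (V, h) be a 4-dimensional Euclidean vector space with complexified dual V*_ℂ, and let θ₁, θ₂ ∈ V*_ℂ be nonzero with θ₁ ∧ θ₂ ≠ 0. If the four conditions |θ₁|² ⟨θ₂, θ̄₁⟩ = ⟨θ₁, θ₂⟩ ⟨θ₁, θ̄₁⟩, |θ₁|² ⟨θ₂, θ̄₂⟩ = ⟨θ₁, θ₂⟩ ⟨θ₁, θ̄₂⟩, |θ₂|² ⟨θ₁, θ̄₁⟩ = ⟨θ₁, θ₂⟩ ⟨θ₂, θ̄₁⟩, |θ₂|² ⟨θ₁, θ̄₂⟩ = ⟨θ₁, θ₂⟩ ⟨θ₂, θ̄₂⟩ hold (where |θ|² = ⟨θ, θ⟩ and ⟨·,·⟩ is ℂ-bilinear), then ⟨θ₁, θ₁⟩ = ⟨θ₂, θ₂⟩ = ⟨θ₁, θ₂⟩ = 0. -/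
open Complex

/-- The ℂ-bilinear extension of the Euclidean metric to complex one-forms on `ℝ⁴`
(components in an orthonormal basis). -/
noncomputable def cbilin4 (x y : Fin 4 → ℂ) : ℂ := ∑ i, x i * y i

/-- Let `(V, h)` be a 4-dimensional Euclidean vector space with
complexified dual `V*_ℂ` (modelled in an orthonormal basis), and let `θ₁, θ₂` be
nonzero complex one-forms with `θ₁ ∧ θ₂ ≠ 0` (i.e. ℂ-linearly independent).  If the
four conditions
`|θ₁|² ⟨θ₂, θ̄₁⟩ = ⟨θ₁, θ₂⟩ ⟨θ₁, θ̄₁⟩`, `|θ₁|² ⟨θ₂, θ̄₂⟩ = ⟨θ₁, θ₂⟩ ⟨θ₁, θ̄₂⟩`,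
`|θ₂|² ⟨θ₁, θ̄₁⟩ = ⟨θ₁, θ₂⟩ ⟨θ₂, θ̄₁⟩`, `|θ₂|² ⟨θ₁, θ̄₂⟩ = ⟨θ₁, θ₂⟩ ⟨θ₂, θ̄₂⟩`
hold (where `|θ|² = ⟨θ, θ⟩` and `⟨·,·⟩` is ℂ-bilinear), then
`⟨θ₁, θ₁⟩ = ⟨θ₂, θ₂⟩ = ⟨θ₁, θ₂⟩ = 0`. -/
theorem isotropy_from_algebraic_system
    (θ₁ θ₂ : Fin 4 → ℂ) (h₁ : θ₁ ≠ 0) (h₂ : θ₂ ≠ 0)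
    (hω : LinearIndependent ℂ ![θ₁, θ₂])
    (e₁ : cbilin4 θ₁ θ₁ * cbilin4 θ₂ (fun i => starRingEnd ℂ (θ₁ i)) =
      cbilin4 θ₁ θ₂ * cbilin4 θ₁ (fun i => starRingEnd ℂ (θ₁ i)))
    (e₂ : cbilin4 θ₁ θ₁ * cbilin4 θ₂ (fun i => starRingEnd ℂ (θ₂ i)) =
      cbilin4 θ₁ θ₂ * cbilin4 θ₁ (fun i => starRingEnd ℂ (θ₂ i)))
    (e₃ : cbilin4 θ₂ θ₂ * cbilin4 θ₁ (fun i => starRingEnd ℂ (θ₁ i)) =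
      cbilin4 θ₁ θ₂ * cbilin4 θ₂ (fun i => starRingEnd ℂ (θ₁ i)))
    (e₄ : cbilin4 θ₂ θ₂ * cbilin4 θ₁ (fun i => starRingEnd ℂ (θ₂ i)) =
      cbilin4 θ₁ θ₂ * cbilin4 θ₂ (fun i => starRingEnd ℂ (θ₂ i))) :
    cbilin4 θ₁ θ₁ = 0 ∧ cbilin4 θ₂ θ₂ = 0 ∧ cbilin4 θ₁ θ₂ = 0 := by
  classical
  set x : EuclideanSpace ℂ (Fin 4) := WithLp.toLp 2 θ₁ with hx
  set y : EuclideanSpace ℂ (Fin 4) := WithLp.toLp 2 θ₂ with hy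
  have hx0 : x ≠ 0 := fun h => h₁ (by simpa [hx] using congrArg WithLp.ofLp h)
  have hy0 : y ≠ 0 := fun h => h₂ (by simpa [hy] using congrArg WithLp.ofLp h)
  set A := cbilin4 θ₁ θ₁ with hA
  set B := cbilin4 θ₂ θ₂ with hB
  set C := cbilin4 θ₁ θ₂ with hC
  set P : ℂ := inner ℂ x x with hP
  set Q : ℂ := inner ℂ y y with hQ
  set R : ℂ := inner ℂ x y with hR
  set S : ℂ := inner ℂ y x with hS
  have h11 : cbilin4 θ₁ (fun i => starRingEnd ℂ (θ₁ i)) = P := by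
    rw [hP, hx, PiLp.inner_apply]; simp only [WithLp.ofLp_toLp, RCLike.inner_apply, cbilin4, mul_comm]
  have h21 : cbilin4 θ₂ (fun i => starRingEnd ℂ (θ₁ i)) = R := by
    rw [hR, hx, hy, PiLp.inner_apply]; simp only [WithLp.ofLp_toLp, RCLike.inner_apply, cbilin4, mul_comm]
  have h12 : cbilin4 θ₁ (fun i => starRingEnd ℂ (θ₂ i)) = S := by
    rw [hS, hx, hy, PiLp.inner_apply]; simp only [WithLp.ofLp_toLp, RCLike.inner_apply, cbilin4, mul_comm]
  have h22 : cbilin4 θ₂ (fun i => starRingEnd ℂ (θ₂ i)) = Q := by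
    rw [hQ, hy, PiLp.inner_apply]; simp only [WithLp.ofLp_toLp, RCLike.inner_apply, cbilin4, mul_comm]
  rw [h11, h21] at e₁
  rw [h12, h22] at e₂
  rw [h11, h21] at e₃
  rw [h12, h22] at e₄
  -- strict Cauchy–Schwarz
  have hRlt : ‖R‖ < ‖x‖ * ‖y‖ := by
    refine lt_of_le_of_ne (norm_inner_le_norm x y) fun h => ?_
    obtain ⟨r, hr, hyx⟩ := (norm_inner_eq_norm_iff hx0 hy0).mp h
    have hz : r • θ₁ + (-1 : ℂ) • θ₂ = 0 := by
      have hyx' : θ₂ = r • θ₁ := by simpa [hx, hy] using congrArg WithLp.ofLp hyx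
      rw [hyx']; module
    have := (LinearIndependent.pair_iff.mp hω r (-1) hz).2
    norm_num at this
  have hPQ : P = ((‖x‖ : ℂ) ^ 2) := inner_self_eq_norm_sq_to_K x
  have hQQ : Q = ((‖y‖ : ℂ) ^ 2) := inner_self_eq_norm_sq_to_K y
  have hSc : S = starRingEnd ℂ R := (inner_conj_symm y x).symm
  have hSR : S * R = ((‖R‖ : ℂ) ^ 2) := by rw [hSc]; exact RCLike.conj_mul R
  have hlt : ‖R‖ ^ 2 < ‖x‖ ^ 2 * ‖y‖ ^ 2 := by
    nlinarith [norm_nonneg R, norm_nonneg x, norm_nonneg y, hRlt]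
  have hD : P * Q - S * R ≠ 0 := by
    rw [hPQ, hQQ, hSR]
    intro h
    have h' : ((‖x‖ ^ 2 * ‖y‖ ^ 2 - ‖R‖ ^ 2 : ℝ) : ℂ) = 0 := by
      push_cast; linear_combination h
    rw [Complex.ofReal_eq_zero] at h'
    linarith
  have hP0 : P ≠ 0 := by rw [hP]; exact inner_self_ne_zero.mpr hx0
  have hA0 : A = 0 := by
    have : A * (P * Q - S * R) = 0 := by linear_combination P * e₂ - S * e₁
    rcases mul_eq_zero.mp this with h | h
    · exact h
    · exact absurd h hD
  have hB0 : B = 0 := by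
    have : B * (P * Q - S * R) = 0 := by linear_combination Q * e₃ - R * e₄
    rcases mul_eq_zero.mp this with h | h
    · exact h
    · exact absurd h hD
  have hC0 : C = 0 := by
    have : C * P = 0 := by linear_combination -e₁ + R * hA0
    rcases mul_eq_zero.mp this with h | h
    · exact h
    · exact absurd h hP0
  exact ⟨hA0, hB0, hC0⟩
end

section
/- Let (V, h) be an oriented 6-dimensional Euclidean vector space. If ρ ∈ ∧³V*_ℂ is a complex three-form satisfying *ρ = i μ ρ for μ = ±1, then ρ ⋄ ρ = 0 in the complexified Kähler-Atiyah algebra; equivalently ρ △₁ ρ = 0 and ⟨ρ, ρ⟩ = 0. -/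
open CliffordAlgebra

section Aux

variable {V : Type*} [AddCommGroup V] [Module ℂ V] (Q : QuadraticForm ℂ V)

private lemma aux_prod_mul_ι (a : V) :
    ∀ (l : List V), (∀ b ∈ l, Q.IsOrtho b a) →
      (l.map (ι Q)).prod * ι Q a = ((-1 : ℂ) ^ l.length) • (ι Q a * (l.map (ι Q)).prod) := by
  intro l
  induction l with
  | nil => intro _; simp
  | cons c t ih =>
    intro h
    have hca : Q.IsOrtho c a := h c List.mem_cons_self
    have ht := ih (fun b hb => h b (List.mem_cons_of_mem _ hb))
    simp only [List.map_cons, List.prod_cons, List.length_cons]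
    rw [mul_assoc, ht, mul_smul_comm, ← mul_assoc, ι_mul_ι_comm_of_isOrtho hca, pow_succ,
      mul_smul, neg_one_smul, neg_mul, smul_neg, ← mul_assoc]
    rw [smul_neg]

private lemma aux_reverse_prod_ortho :
    ∀ (l : List V), l.Pairwise Q.IsOrtho →
      reverse ((l.map (ι Q)).prod) = ((-1 : ℂ) ^ (l.length.choose 2)) • (l.map (ι Q)).prod := by
  intro l
  induction l with
  | nil => intro _; simp
  | cons c t ih =>
    intro h
    rw [List.pairwise_cons] at h
    simp only [List.map_cons, List.prod_cons, List.length_cons]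
    rw [reverse.map_mul, reverse_ι, ih h.2, smul_mul_assoc,
      aux_prod_mul_ι Q c t (fun b hb => (h.1 b hb).symm), smul_smul, ← pow_add]
    congr 2
    rw [Nat.choose_succ_succ, Nat.choose_one_right, Nat.add_comm]

private lemma aux_rev_gen (a b c : V) :
    reverse (changeForm (changeForm.neg_proof (changeForm.associated_neg_proof (Q := Q)))
        (CliffordAlgebra.ι (0 : QuadraticForm ℂ V) a *
          (CliffordAlgebra.ι 0 b * CliffordAlgebra.ι 0 c))) =
      -(changeForm (changeForm.neg_proof (changeForm.associated_neg_proof (Q := Q)))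
        (CliffordAlgebra.ι (0 : QuadraticForm ℂ V) a *
          (CliffordAlgebra.ι 0 b * CliffordAlgebra.ι 0 c))) := by
  set B : LinearMap.BilinForm ℂ V := -(QuadraticMap.associated (-Q)) with hB
  have hsym : ∀ x y : V, B x y = B y x := by
    intro x y
    simp only [hB, LinearMap.neg_apply, neg_inj]
    exact ((QuadraticMap.associated_isSymm ℂ (-Q)) x y).symm ▸ rfl
  have hpol : ∀ x y : V, QuadraticMap.polar Q x y = B x y + B y x := by
    intro x y
    have h2 := DFunLike.congr_fun (DFunLike.congr_fun (QuadraticMap.two_nsmul_associated ℂ (-Q)) x) y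
    simp only [LinearMap.smul_apply, QuadraticMap.polarBilin_apply_apply, nsmul_eq_mul,
      Nat.cast_ofNat, QuadraticMap.coeFn_neg, QuadraticMap.polar_neg] at h2
    have hxy : B x y = -((QuadraticMap.associated (R := ℂ) (-Q)) x y) := rfl
    have hyx : B y x = -((QuadraticMap.associated (R := ℂ) (-Q)) y x) := rfl
    have hs : (QuadraticMap.associated (R := ℂ) (-Q)) x y = (QuadraticMap.associated (R := ℂ) (-Q)) y x :=
      (QuadraticMap.associated_isSymm ℂ (-Q)) x y
    rw [hxy, hyx, ← hs]
    linear_combination h2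
  simp only [changeForm_ι_mul, changeForm_ι_mul_ι, changeForm_ι, map_sub, map_smul,
    contractLeft_ι_mul, contractLeft_ι, contractLeft_algebraMap, map_zero,
    reverse.map_mul, reverse_ι, reverse.commutes, ← hB]
  have key : CliffordAlgebra.ι Q c * CliffordAlgebra.ι Q b * CliffordAlgebra.ι Q a =
      algebraMap ℂ _ (QuadraticMap.polar Q b c) * CliffordAlgebra.ι Q a
        - algebraMap ℂ _ (QuadraticMap.polar Q a c) * CliffordAlgebra.ι Q b
        + algebraMap ℂ _ (QuadraticMap.polar Q a b) * CliffordAlgebra.ι Q c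
        - CliffordAlgebra.ι Q a * (CliffordAlgebra.ι Q b * CliffordAlgebra.ι Q c) := by
    rw [ι_mul_ι_comm c b, sub_mul, mul_assoc, ι_mul_ι_comm c a, mul_sub, ← mul_assoc,
      ι_mul_ι_comm b a, sub_mul, QuadraticMap.polar_comm (⇑Q) b c, QuadraticMap.polar_comm (⇑Q) c a,
      QuadraticMap.polar_comm (⇑Q) b a]
    simp only [Algebra.commutes, mul_assoc]
    abel
  rw [sub_mul, key]
  simp only [mul_sub, sub_mul, add_mul, ← Algebra.commutes, ← Algebra.smul_def]
  simp only [hpol, hsym b a, hsym c a, hsym c b, add_smul]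
  module

private lemma aux_rev_symm (ρ : ExteriorAlgebra ℂ V) (hρ3 : ρ ∈ ⋀[ℂ]^3 V) :
    reverse ((equivExterior Q).symm ρ) = -((equivExterior Q).symm ρ) := by
  rw [← ExteriorAlgebra.ιMulti_span_fixedDegree] at hρ3
  induction hρ3 using Submodule.span_induction with
  | mem x hx =>
    obtain ⟨v, rfl⟩ := hx
    have h1 : (equivExterior Q).symm (ExteriorAlgebra.ιMulti ℂ 3 v)
        = changeForm (changeForm.neg_proof changeForm.associated_neg_proof)
            (ExteriorAlgebra.ιMulti ℂ 3 v) := rfl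
    rw [h1, ExteriorAlgebra.ιMulti_succ_apply, ExteriorAlgebra.ιMulti_succ_apply,
      ExteriorAlgebra.ιMulti_succ_apply, ExteriorAlgebra.ιMulti_zero_apply, mul_one]
    exact aux_rev_gen Q _ _ _
  | zero => simp
  | add x y _ _ hx hy => rw [map_add, map_add, hx, hy, neg_add]
  | smul r x _ hx => rw [map_smul, map_smul, hx, smul_neg]

end Aux

/-- Let `(V, h)` be an oriented 6-dimensional Euclidean vector space,
with complexified Clifford (Kähler–Atiyah) algebra modelled on `CliffordAlgebra Q` for a
quadratic form `Q` with an orthonormal basis `b` (the complexification of `h`), and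
volume form `ν = e¹ ⋄ ⋯ ⋄ e⁶`.  If `ρ` is a complex three-form (an element of `⋀³` of
the complexified exterior algebra, transported to the Clifford algebra by the
Chevalley–Riesz isomorphism) satisfying `*ρ = i μ ρ` for `μ = ±1`, where the Hodge star
is `*x = τ (x) ⋄ ν`, then `ρ ⋄ ρ = 0` in the Kähler–Atiyah algebra. -/
theorem selfdual_three_form_diamond_sq_zero
    {V : Type*} [AddCommGroup V] [Module ℂ V]
    (Q : QuadraticForm ℂ V) (b : Module.Basis (Fin 6) ℂ V)
    (hb_norm : ∀ i, Q (b i) = 1)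
    (hb_orth : ∀ i j, i ≠ j → QuadraticMap.polar Q (b i) (b j) = 0)
    (ν : CliffordAlgebra Q)
    (hν : ν = (List.ofFn fun i => CliffordAlgebra.ι Q (b i)).prod)
    (μ : ℂ) (hμ : μ = 1 ∨ μ = -1)
    (ρ : ExteriorAlgebra ℂ V) (hρ3 : ρ ∈ ⋀[ℂ]^3 V)
    (hstar :
      CliffordAlgebra.reverse ((CliffordAlgebra.equivExterior Q).symm ρ) * ν =
        (Complex.I * μ) • (CliffordAlgebra.equivExterior Q).symm ρ) :
    (CliffordAlgebra.equivExterior Q).symm ρ *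
      (CliffordAlgebra.equivExterior Q).symm ρ = 0 := by
  set x := (CliffordAlgebra.equivExterior Q).symm ρ with hx
  have hxrev : reverse x = -x := aux_rev_symm Q ρ hρ3
  -- reverse ν = -ν
  have hνeq : ν = ((List.ofFn b).map (ι Q)).prod := by
    rw [hν, List.map_ofFn]; rfl
  have hνrev : reverse ν = -ν := by
    have hpw : (List.ofFn b).Pairwise Q.IsOrtho := by
      rw [List.pairwise_ofFn]
      intro i j hij
      have := hb_orth i j (Fin.ne_of_lt hij)
      rw [QuadraticMap.IsOrtho, ← sub_eq_zero]
      have hp : Q (b i + b j) - Q (b i) - Q (b j) = 0 := this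
      linear_combination hp
    have := aux_reverse_prod_ortho Q (List.ofFn b) hpw
    rw [← hνeq] at this
    rw [this, show (List.ofFn ⇑b).length.choose 2 = 15 by rw [List.length_ofFn]; rfl,
      show ((-1:ℂ))^(15:ℕ) = -1 by norm_num, neg_one_smul]
  -- x * ν = -(I μ) x  and  ν * x = (I μ) x
  have h1 : x * ν = -((Complex.I * μ) • x) := by
    have := hstar
    rw [hxrev, neg_mul] at this
    rw [← neg_eq_iff_eq_neg]
    exact this
  have h2 : ν * x = (Complex.I * μ) • x := by
    have h := congrArg reverse hstar
    rw [reverse.map_mul, reverse_reverse, map_smul, hxrev, hνrev, neg_mul, smul_neg,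
      neg_inj] at h
    exact h
  have h3 : (Complex.I * μ) • (x * x) = -((Complex.I * μ) • (x * x)) := by
    calc (Complex.I * μ) • (x * x) = x * (ν * x) := by rw [h2, mul_smul_comm]
    _ = (x * ν) * x := by rw [mul_assoc]
    _ = -((Complex.I * μ) • (x * x)) := by rw [h1, neg_mul, smul_mul_assoc]
  have h4 : (2 : ℂ) • ((Complex.I * μ) • (x * x)) = 0 := by
    rw [two_smul]
    nth_rewrite 1 [h3]
    exact neg_add_cancel _
  have hIμ : (Complex.I * μ) ≠ 0 := by
    rcases hμ with h | h <;> simp [h, Complex.I_ne_zero]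
  rw [smul_smul, smul_eq_zero] at h4
  rcases h4 with h | h
  · exact absurd h (by simp [hIμ])
  · exact h
end

section
/- Let (V, h) be a quadratic vector space of dimension d, and let α ∈ ∧^a V*, β ∈ ∧^b V* with a + b ≤ d. Then α △_a (*β) = *(β ∧ α), where △_a is the a-th generalized product and * the Hodge star. -/
/-- Iterated interior product `ι_{e_{f 0}} ⋯ ι_{e_{f (k-1)}} x` of an element of the
exterior algebra of `ℝ^d` along a list of (orthonormal) basis directions. -/
noncomputable def extContr19 {d k : ℕ} (f : Fin k → Fin d)
    (x : ExteriorAlgebra ℝ (Fin d → ℝ)) : ExteriorAlgebra ℝ (Fin d → ℝ) :=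
  (List.ofFn f).foldr
    (fun i y =>
      CliffordAlgebra.contractLeft (Q := (0 : QuadraticForm ℝ (Fin d → ℝ)))
        (LinearMap.proj i) y) x

/-- The `k`-th generalized product `△_k` of the quadratic space `(ℝ^d, h)` whose dual
metric is diagonal with entries `ε` in the standard (orthonormal) basis. -/
noncomputable def genProd19 {d : ℕ} (ε : Fin d → ℝ) (k : ℕ)
    (α β : ExteriorAlgebra ℝ (Fin d → ℝ)) : ExteriorAlgebra ℝ (Fin d → ℝ) :=
  (k.factorial : ℝ)⁻¹ •
    ∑ f : Fin k → Fin d, (∏ j, ε (f j)) • (extContr19 f α * extContr19 f β)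

/-- The geometric (Clifford) product `⋄` on the exterior algebra of `(ℝ^d, h)`,
transported from the Clifford algebra of the quadratic form with diagonal weights `ε`
via the Chevalley–Riesz isomorphism. -/
noncomputable def kaDiamond {d : ℕ} (ε : Fin d → ℝ)
    (x y : ExteriorAlgebra ℝ (Fin d → ℝ)) : ExteriorAlgebra ℝ (Fin d → ℝ) :=
  CliffordAlgebra.equivExterior (QuadraticMap.weightedSumSquares ℝ ε)
    ((CliffordAlgebra.equivExterior (QuadraticMap.weightedSumSquares ℝ ε)).symm x *
      (CliffordAlgebra.equivExterior (QuadraticMap.weightedSumSquares ℝ ε)).symm y)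

/-- The reversion anti-automorphism `τ` on the exterior algebra, acting as
`(−1)^{a(a−1)/2}` on degree-`a` forms. -/
noncomputable def extReverse {d : ℕ} (x : ExteriorAlgebra ℝ (Fin d → ℝ)) :
    ExteriorAlgebra ℝ (Fin d → ℝ) :=
  CliffordAlgebra.reverse (Q := (0 : QuadraticForm ℝ (Fin d → ℝ))) x

/-- The volume form `ν = e¹ ∧ ⋯ ∧ e^d` of `(ℝ^d, h)` in the standard (orthonormal,
oriented) basis. -/
noncomputable def extVolume (d : ℕ) : ExteriorAlgebra ℝ (Fin d → ℝ) :=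
  (List.ofFn fun i : Fin d => ExteriorAlgebra.ι ℝ (Pi.single i (1 : ℝ))).prod

/-- The Hodge star operator determined by the metric with diagonal dual weights `ε` and
the standard orientation, defined by `*x = τ (x) ⋄ ν`. -/
noncomputable def kaHodge {d : ℕ} (ε : Fin d → ℝ)
    (x : ExteriorAlgebra ℝ (Fin d → ℝ)) : ExteriorAlgebra ℝ (Fin d → ℝ) :=
  kaDiamond ε (extReverse x) (extVolume d)

namespace S19
variable {d : ℕ}

/-- basis covector contraction -/
noncomputable def ctr (i : Fin d) :
    ExteriorAlgebra ℝ (Fin d → ℝ) →ₗ[ℝ] ExteriorAlgebra ℝ (Fin d → ℝ) :=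
  CliffordAlgebra.contractLeft (Q := (0 : QuadraticForm ℝ (Fin d → ℝ))) (LinearMap.proj i)

noncomputable def e (i : Fin d) : ExteriorAlgebra ℝ (Fin d → ℝ) :=
  ExteriorAlgebra.ι ℝ (Pi.single i (1 : ℝ))

noncomputable def blade (l : List (Fin d)) : ExteriorAlgebra ℝ (Fin d → ℝ) :=
  (l.map e).prod

noncomputable def cc (ε : Fin d → ℝ) (i : Fin d) :
    CliffordAlgebra (QuadraticMap.weightedSumSquares ℝ ε) :=
  CliffordAlgebra.ι _ (Pi.single i (1 : ℝ))

noncomputable def cblade (ε : Fin d → ℝ) (l : List (Fin d)) :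
    CliffordAlgebra (QuadraticMap.weightedSumSquares ℝ ε) :=
  (l.map (cc ε)).prod

@[simp] lemma blade_nil : blade ([] : List (Fin d)) = 1 := rfl
@[simp] lemma blade_cons (i : Fin d) (l : List (Fin d)) :
    blade (i :: l) = e i * blade l := by simp [blade]
lemma blade_append (l m : List (Fin d)) : blade (l ++ m) = blade l * blade m := by
  simp [blade]
@[simp] lemma cblade_nil (ε : Fin d → ℝ) : cblade ε ([] : List (Fin d)) = 1 := rfl
@[simp] lemma cblade_cons (ε : Fin d → ℝ) (i : Fin d) (l : List (Fin d)) :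
    cblade ε (i :: l) = cc ε i * cblade ε l := by simp [cblade]

lemma extVolume_eq : extVolume d = blade (List.finRange d) := by
  simp only [extVolume, blade, List.ofFn_eq_map]
  rfl

lemma Qsingle (ε : Fin d → ℝ) (i : Fin d) :
    QuadraticMap.weightedSumSquares ℝ ε (Pi.single i (1 : ℝ)) = ε i := by
  rw [QuadraticMap.weightedSumSquares_apply]
  rw [Finset.sum_eq_single i]
  · simp
  · intro b _ hb; simp [Pi.single_apply, hb]
  · simp

lemma Qsingle_add (ε : Fin d → ℝ) {i j : Fin d} (h : i ≠ j) :
    QuadraticMap.weightedSumSquares ℝ ε (Pi.single i (1 : ℝ) + Pi.single j 1) = ε i + ε j := by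
  rw [QuadraticMap.weightedSumSquares_apply]
  set v : Fin d → ℝ := Pi.single i 1 + Pi.single j 1 with hv
  have : ∀ k, ε k • (v k * v k)
      = (if k = i then ε i else 0) + (if k = j then ε j else 0) := by
    intro k
    simp only [hv, Pi.add_apply]
    rcases eq_or_ne k i with rfl | hki
    · simp [Pi.single_apply, h.symm, Ne.symm h, h]
    · rcases eq_or_ne k j with rfl | hkj
      · simp [Pi.single_apply, hki, h.symm]
      · simp [Pi.single_apply, hki, hkj]
  rw [Finset.sum_congr rfl (fun k _ => this k), Finset.sum_add_distrib]
  simp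

lemma polar_single (ε : Fin d → ℝ) {i j : Fin d} (h : i ≠ j) :
    QuadraticMap.polar (QuadraticMap.weightedSumSquares ℝ ε) (Pi.single i (1:ℝ))
      (Pi.single j 1) = 0 := by
  rw [QuadraticMap.polar, Qsingle_add ε h, Qsingle, Qsingle]
  ring

-- chunk 2: algebraic basics
variable (ε : Fin d → ℝ)

lemma e_anticomm {i j : Fin d} : e i * e j = -(e (d := d) j * e i) := by
  rw [eq_neg_iff_add_eq_zero]
  simpa [e] using ExteriorAlgebra.ι_add_mul_swap (R := ℝ) (Pi.single i (1:ℝ)) (Pi.single j 1)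

lemma e_mul_self (i : Fin d) : e i * e (d := d) i = 0 := by
  simpa [e] using ExteriorAlgebra.ι_sq_zero (R := ℝ) (Pi.single i (1:ℝ))

lemma e_mul_blade_mem {i : Fin d} {l : List (Fin d)} (h : i ∈ l) :
    e i * blade l = 0 := by
  induction l with
  | nil => simp at h
  | cons j l ih =>
    rcases List.mem_cons.mp h with rfl | h'
    · rw [blade_cons, ← mul_assoc, e_mul_self, zero_mul]
    · rw [blade_cons, ← mul_assoc, e_anticomm, neg_mul, mul_assoc, ih h', mul_zero, neg_zero]

lemma blade_eq_zero_of_not_nodup {l : List (Fin d)} (h : ¬ l.Nodup) : blade l = 0 := by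
  induction l with
  | nil => simp at h
  | cons j l ih =>
    rw [List.nodup_cons] at h
    push_neg at h
    by_cases hj : j ∈ l
    · rw [blade_cons, e_mul_blade_mem hj]
    · rw [blade_cons, ih (h hj), mul_zero]

lemma cc_mul_self (i : Fin d) : cc ε i * cc ε i = algebraMap ℝ _ (ε i) := by
  rw [cc, CliffordAlgebra.ι_sq_scalar, Qsingle]

lemma cc_anticomm {i j : Fin d} (h : i ≠ j) : cc ε i * cc ε j = -(cc ε j * cc ε i) := by
  have := CliffordAlgebra.ι_mul_ι_add_swap (Q := QuadraticMap.weightedSumSquares ℝ ε)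
    (Pi.single i (1:ℝ)) (Pi.single j 1)
  rw [eq_neg_iff_add_eq_zero]
  have hp : QuadraticMap.polar (⇑(QuadraticMap.weightedSumSquares ℝ ε))
      (Pi.single i (1:ℝ)) (Pi.single j 1) = 0 := polar_single ε h
  rw [cc, cc]
  rw [this, hp, map_zero]

lemma cc_mul_cblade_mem {i : Fin d} {l : List (Fin d)} (hd : l.Nodup) (h : i ∈ l) :
    cc ε i * cblade ε l = (ε i * (-1 : ℝ) ^ (l.idxOf i)) • cblade ε (l.erase i) := by
  induction l with
  | nil => simp at h
  | cons j l ih =>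
    rw [List.nodup_cons] at hd
    rcases eq_or_ne i j with rfl | hij
    · rw [cblade_cons, ← mul_assoc, cc_mul_self, List.erase_cons_head]
      simp [Algebra.smul_def]
    · have h' : i ∈ l := by
        rcases List.mem_cons.mp h with h1 | h1
        · exact absurd h1 hij
        · exact h1
      rw [cblade_cons, ← mul_assoc, cc_anticomm ε hij, neg_mul, mul_assoc, ih hd.2 h',
        List.erase_cons_tail]
      · rw [List.idxOf_cons_ne _ hij.symm, cblade_cons, mul_smul_comm, ← neg_smul]
        congr 1
        rw [pow_succ]
        ring
      · simp [hij.symm]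

lemma ctr_e_blade (κ : Module.Dual ℝ (Fin d → ℝ)) (v : Fin d → ℝ)
    (x : ExteriorAlgebra ℝ (Fin d → ℝ)) :
    CliffordAlgebra.contractLeft (Q := (0 : QuadraticForm ℝ (Fin d → ℝ))) κ
      (ExteriorAlgebra.ι ℝ v * x)
    = κ v • x - ExteriorAlgebra.ι ℝ v *
        CliffordAlgebra.contractLeft (Q := (0 : QuadraticForm ℝ (Fin d → ℝ))) κ x :=
  CliffordAlgebra.contractLeft_ι_mul κ v x

-- chunk 3: contraction on blades, transport

lemma ctr_blade_not_mem (κ : Module.Dual ℝ (Fin d → ℝ)) {l : List (Fin d)}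
    (h : ∀ j ∈ l, κ (Pi.single j 1) = 0) :
    CliffordAlgebra.contractLeft (Q := (0 : QuadraticForm ℝ (Fin d → ℝ))) κ (blade l) = 0 := by
  induction l with
  | nil =>
    simpa using CliffordAlgebra.contractLeft_one (Q := (0 : QuadraticForm ℝ (Fin d → ℝ))) κ
  | cons j l ih =>
    rw [blade_cons, e, ctr_e_blade, ih (fun i hi => h i (List.mem_cons_of_mem _ hi)),
      h j List.mem_cons_self, mul_zero, zero_smul, sub_zero]

lemma proj_single (i j : Fin d) :
    (LinearMap.proj i : (Fin d → ℝ) →ₗ[ℝ] ℝ) (Pi.single j 1) = if j = i then 1 else 0 := by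
  simp [Pi.single_apply, eq_comm]

lemma ctr_blade_not_mem' {i : Fin d} {l : List (Fin d)} (h : i ∉ l) :
    ctr i (blade l) = 0 := by
  apply ctr_blade_not_mem
  intro j hj
  rw [proj_single, if_neg]
  exact fun hji => h (by rw [← hji]; exact hj)

lemma ctr_blade_mem {i : Fin d} {l : List (Fin d)} (hd : l.Nodup) (h : i ∈ l) :
    ctr i (blade l) = ((-1 : ℝ) ^ (l.idxOf i)) • blade (l.erase i) := by
  induction l with
  | nil => simp at h
  | cons j l ih =>
    rw [List.nodup_cons] at hd
    rcases eq_or_ne i j with rfl | hij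
    · rw [blade_cons, e, ctr, ctr_e_blade, proj_single]
      simp only [if_pos rfl, one_smul, List.erase_cons_head, List.idxOf_cons_self,
        pow_zero]
      rw [show CliffordAlgebra.contractLeft (Q := (0 : QuadraticForm ℝ (Fin d → ℝ)))
          (LinearMap.proj i) (blade l) = ctr i (blade l) from rfl,
        ctr_blade_not_mem' hd.1, mul_zero, sub_zero]
      simp
    · have h' : i ∈ l := by
        rcases List.mem_cons.mp h with h1 | h1
        · exact absurd h1 hij
        · exact h1
      rw [blade_cons, e, ctr, ctr_e_blade, proj_single, if_neg hij.symm, zero_smul, zero_sub,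
        show CliffordAlgebra.contractLeft (Q := (0 : QuadraticForm ℝ (Fin d → ℝ)))
          (LinearMap.proj i) (blade l) = ctr i (blade l) from rfl,
        ih hd.2 h', List.erase_cons_tail, List.idxOf_cons_ne _ hij.symm]
      · rw [blade_cons, mul_smul_comm, ← neg_smul]
        congr 1
        rw [pow_succ]
        ring
      · simp [hij.symm]

lemma assocneg_single (ε : Fin d → ℝ) {i j : Fin d} (hij : i ≠ j) :
    (QuadraticMap.associated (R := ℝ) (-(QuadraticMap.weightedSumSquares ℝ ε)))
      (Pi.single i (1:ℝ)) (Pi.single j 1) = 0 := by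
  rw [QuadraticMap.associated_apply]
  have h1 : (-(QuadraticMap.weightedSumSquares ℝ ε)) (Pi.single i (1:ℝ) + Pi.single j 1)
      = -(ε i + ε j) := by
    rw [QuadraticMap.neg_apply, Qsingle_add ε hij]
  have h2 : (-(QuadraticMap.weightedSumSquares ℝ ε)) (Pi.single i (1:ℝ)) = -ε i := by
    rw [QuadraticMap.neg_apply, Qsingle]
  have h3 : (-(QuadraticMap.weightedSumSquares ℝ ε)) (Pi.single j (1:ℝ)) = -ε j := by
    rw [QuadraticMap.neg_apply, Qsingle]
  rw [h1, h2, h3]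
  ring_nf
  simp

lemma equivExterior_one (ε : Fin d → ℝ) :
    CliffordAlgebra.equivExterior (QuadraticMap.weightedSumSquares ℝ ε) 1 = 1 := by
  rw [CliffordAlgebra.equivExterior, CliffordAlgebra.changeFormEquiv_apply]
  exact CliffordAlgebra.changeForm_one _

lemma equivExterior_ι_mul (ε : Fin d → ℝ) (v : Fin d → ℝ)
    (x : CliffordAlgebra (QuadraticMap.weightedSumSquares ℝ ε)) :
    CliffordAlgebra.equivExterior (QuadraticMap.weightedSumSquares ℝ ε)
      (CliffordAlgebra.ι _ v * x) =
    ExteriorAlgebra.ι ℝ v * CliffordAlgebra.equivExterior (QuadraticMap.weightedSumSquares ℝ ε) x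
      - CliffordAlgebra.contractLeft (Q := (0 : QuadraticForm ℝ (Fin d → ℝ)))
        ((QuadraticMap.associated (R := ℝ) (-(QuadraticMap.weightedSumSquares ℝ ε))) v)
        (CliffordAlgebra.equivExterior (QuadraticMap.weightedSumSquares ℝ ε) x) := by
  simp only [CliffordAlgebra.equivExterior, CliffordAlgebra.changeFormEquiv_apply]
  exact CliffordAlgebra.changeForm_ι_mul (Q' := (0 : QuadraticForm ℝ (Fin d → ℝ)))
    CliffordAlgebra.changeForm.associated_neg_proof v x

lemma equivExterior_cblade (ε : Fin d → ℝ) {l : List (Fin d)} (hd : l.Nodup) :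
    CliffordAlgebra.equivExterior (QuadraticMap.weightedSumSquares ℝ ε) (cblade ε l)
      = blade l := by
  induction l with
  | nil => rw [cblade_nil, blade_nil]; exact equivExterior_one ε
  | cons j l ih =>
    rw [List.nodup_cons] at hd
    rw [cblade_cons, cc, equivExterior_ι_mul, ih hd.2, blade_cons, e,
      ctr_blade_not_mem _ (fun i hi => assocneg_single ε (by rintro rfl; exact hd.1 hi)), sub_zero]

lemma equivExterior_symm_blade (ε : Fin d → ℝ) {l : List (Fin d)} (hd : l.Nodup) :
    (CliffordAlgebra.equivExterior (QuadraticMap.weightedSumSquares ℝ ε)).symm (blade l)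
      = cblade ε l := by
  rw [LinearEquiv.symm_apply_eq, equivExterior_cblade ε hd]

lemma extReverse_blade (l : List (Fin d)) : extReverse (blade l) = blade l.reverse := by
  induction l with
  | nil => simp [extReverse, blade_nil]
  | cons j l ih =>
    rw [blade_cons, extReverse, CliffordAlgebra.reverse.map_mul, ← extReverse,
      ih, e, CliffordAlgebra.reverse_ι, List.reverse_cons, blade_append]
    simp [blade, e]

-- chunk 4: Hodge star computations

lemma kaHodge_zero (ε : Fin d → ℝ) : kaHodge ε (0 : ExteriorAlgebra ℝ (Fin d → ℝ)) = 0 := by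
  simp [kaHodge, kaDiamond, extReverse]

lemma kaHodge_smul (ε : Fin d → ℝ) (r : ℝ) (x : ExteriorAlgebra ℝ (Fin d → ℝ)) :
    kaHodge ε (r • x) = r • kaHodge ε x := by
  simp [kaHodge, kaDiamond, extReverse, smul_mul_assoc]

lemma kaHodge_add (ε : Fin d → ℝ) (x y : ExteriorAlgebra ℝ (Fin d → ℝ)) :
    kaHodge ε (x + y) = kaHodge ε x + kaHodge ε y := by
  simp [kaHodge, kaDiamond, extReverse, add_mul]

/-- the residual list -/
def rfil (m : List (Fin d)) : List (Fin d) := (List.finRange d).filter (fun j => j ∉ m)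

lemma rfil_nodup (m : List (Fin d)) : (rfil m).Nodup :=
  (List.nodup_finRange d).filter _

lemma mem_rfil {i : Fin d} {m : List (Fin d)} : i ∈ rfil m ↔ i ∉ m := by
  simp [rfil]

lemma rfil_erase (i : Fin d) (m : List (Fin d)) :
    (rfil m).erase i = rfil (i :: m) := by
  rw [(rfil_nodup m).erase_eq_filter, rfil, rfil, List.filter_filter]
  apply List.filter_congr
  intro x _
  by_cases h1 : x = i <;> by_cases h2 : x ∈ m <;> simp [h1, h2]

lemma cblade_mul_vol (ε : Fin d → ℝ) {m : List (Fin d)} (hd : m.Nodup) :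
    ∃ t : ℝ, cblade ε m * cblade ε (List.finRange d) = t • cblade ε (rfil m) := by
  induction m with
  | nil =>
    refine ⟨1, ?_⟩
    rw [cblade_nil, one_mul, one_smul]
    congr 1
    rw [rfil]
    symm
    apply List.filter_eq_self.mpr
    simp
  | cons i m ih =>
    rw [List.nodup_cons] at hd
    obtain ⟨t, ht⟩ := ih hd.2
    rw [cblade_cons, mul_assoc, ht, mul_smul_comm,
      cc_mul_cblade_mem ε (rfil_nodup m) (mem_rfil.mpr hd.1), rfil_erase]
    exact ⟨t * (ε i * (-1) ^ (rfil m).idxOf i), by rw [smul_smul]⟩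

lemma kaHodge_blade (ε : Fin d → ℝ) {n : List (Fin d)} (hd : n.Nodup) :
    kaHodge ε (blade n) = CliffordAlgebra.equivExterior (QuadraticMap.weightedSumSquares ℝ ε)
      (cblade ε n.reverse * cblade ε (List.finRange d)) := by
  rw [kaHodge, kaDiamond, extReverse_blade, extVolume_eq,
    equivExterior_symm_blade ε (by simpa using hd),
    equivExterior_symm_blade ε (List.nodup_finRange d)]

/-- STEP: single-vector contraction/Hodge duality -/
lemma step (ε : Fin d → ℝ) (n : List (Fin d)) (i : Fin d) :
    ε i • ctr i (kaHodge ε (blade n)) = kaHodge ε (blade (n ++ [i])) := by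
  by_cases hd : n.Nodup
  · by_cases hi : i ∈ n
    · -- RHS zero
      have hz : blade (n ++ [i]) = 0 := blade_eq_zero_of_not_nodup (by
        simp [List.nodup_append, hi])
      rw [hz, kaHodge_zero]
      obtain ⟨t, ht⟩ := cblade_mul_vol ε (List.nodup_reverse.mpr hd)
      rw [kaHodge_blade ε hd, ht, map_smul, map_smul,
        equivExterior_cblade ε (rfil_nodup _), ctr_blade_not_mem'
          (by rw [mem_rfil]; simp [hi]), smul_zero, smul_zero]
    · -- main case
      obtain ⟨t, ht⟩ := cblade_mul_vol ε (List.nodup_reverse.mpr hd)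
      have hir : i ∈ rfil n.reverse := mem_rfil.mpr (by simpa using hi)
      have hrn : (rfil n.reverse).Nodup := rfil_nodup _
      have h1 : kaHodge ε (blade (n ++ [i]))
          = CliffordAlgebra.equivExterior (QuadraticMap.weightedSumSquares ℝ ε)
            (cc ε i * (cblade ε n.reverse * cblade ε (List.finRange d))) := by
        rw [kaHodge_blade ε (by simp [List.nodup_append, hi, hd]; rintro a ha rfl; exact hi ha)]
        rw [List.reverse_append]
        simp only [List.reverse_singleton, List.singleton_append, cblade_cons, mul_assoc]
      rw [h1, ht, mul_smul_comm, cc_mul_cblade_mem ε hrn hir, smul_smul, map_smul,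
        equivExterior_cblade ε (hrn.erase i)]
      rw [kaHodge_blade ε hd, ht, map_smul, equivExterior_cblade ε hrn, map_smul,
        ctr_blade_mem hrn hir, smul_smul, smul_smul]
      congr 1
      ring
  · have h1 : blade n = 0 := blade_eq_zero_of_not_nodup hd
    have h2 : blade (n ++ [i]) = 0 := blade_eq_zero_of_not_nodup (by
      intro hnd
      exact hd (List.Nodup.of_append_left hnd))
    rw [h1, h2, kaHodge_zero]
    simp [kaHodge_zero]

/-- iterated contraction, innermost first -/
noncomputable def Dc : List (Fin d) → ExteriorAlgebra ℝ (Fin d → ℝ) → ExteriorAlgebra ℝ (Fin d → ℝ)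
  | [], x => x
  | i :: l, x => Dc l (ctr i x)

@[simp] lemma Dc_nil (x : ExteriorAlgebra ℝ (Fin d → ℝ)) : Dc [] x = x := rfl
@[simp] lemma Dc_cons (i : Fin d) (l : List (Fin d)) (x : ExteriorAlgebra ℝ (Fin d → ℝ)) :
    Dc (i :: l) x = Dc l (ctr i x) := rfl

lemma Dc_smul (l : List (Fin d)) (r : ℝ) (x : ExteriorAlgebra ℝ (Fin d → ℝ)) :
    Dc l (r • x) = r • Dc l x := by
  induction l generalizing x with
  | nil => rfl
  | cons i l ih => rw [Dc_cons, map_smul, ih, Dc_cons]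

lemma Dc_add (l : List (Fin d)) (x y : ExteriorAlgebra ℝ (Fin d → ℝ)) :
    Dc l (x + y) = Dc l x + Dc l y := by
  induction l generalizing x y with
  | nil => rfl
  | cons i l ih => rw [Dc_cons, map_add, ih, Dc_cons, Dc_cons]

lemma Dc_zero (l : List (Fin d)) : Dc l (0 : ExteriorAlgebra ℝ (Fin d → ℝ)) = 0 := by
  induction l with
  | nil => rfl
  | cons i l ih => rw [Dc_cons, map_zero, ih]

lemma Dc_neg (l : List (Fin d)) (x : ExteriorAlgebra ℝ (Fin d → ℝ)) :
    Dc l (-x) = -Dc l x := by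
  induction l generalizing x with
  | nil => rfl
  | cons i l ih => rw [Dc_cons, map_neg, ih, Dc_cons]

/-- BRIDGE -/
lemma bridge (ε : Fin d → ℝ) (l n : List (Fin d)) :
    ((l.map ε).prod) • Dc l (kaHodge ε (blade n)) = kaHodge ε (blade (n ++ l)) := by
  induction l generalizing n with
  | nil => simp
  | cons i l ih =>
    have h0 : ((i :: l).map ε).prod • Dc (i :: l) (kaHodge ε (blade n))
        = ((l.map ε).prod) • Dc l (ε i • ctr i (kaHodge ε (blade n))) := by
      rw [List.map_cons, List.prod_cons, Dc_cons, Dc_smul, ← mul_smul, mul_comm]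
    rw [h0, step, ih (n ++ [i]), List.append_assoc, List.singleton_append]

-- chunk 5: the generalized-product sum lemma

noncomputable def extContrL (l : List (Fin d)) (x : ExteriorAlgebra ℝ (Fin d → ℝ)) :
    ExteriorAlgebra ℝ (Fin d → ℝ) :=
  l.foldr (fun i y => ctr i y) x

lemma extContr19_eq {k : ℕ} (f : Fin k → Fin d) (x : ExteriorAlgebra ℝ (Fin d → ℝ)) :
    extContr19 f x = extContrL (List.ofFn f) x := rfl

lemma extContrL_smul (l : List (Fin d)) (r : ℝ) (x : ExteriorAlgebra ℝ (Fin d → ℝ)) :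
    extContrL l (r • x) = r • extContrL l x := by
  induction l with
  | nil => rfl
  | cons i l ih => simp only [extContrL, List.foldr_cons] at ih ⊢; rw [ih, map_smul]

lemma extContrL_zero (l : List (Fin d)) : extContrL l (0 : ExteriorAlgebra ℝ (Fin d → ℝ)) = 0 := by
  induction l with
  | nil => rfl
  | cons i l ih => simp only [extContrL, List.foldr_cons] at ih ⊢; rw [ih, map_zero]

lemma extContrL_add (l : List (Fin d)) (x y : ExteriorAlgebra ℝ (Fin d → ℝ)) :
    extContrL l (x + y) = extContrL l x + extContrL l y := by
  induction l with
  | nil => rfl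
  | cons i l ih => simp only [extContrL, List.foldr_cons] at ih ⊢; rw [ih, map_add]

lemma ofFn_snoc {k : ℕ} (g : Fin k → Fin d) (i : Fin d) :
    List.ofFn (Fin.snoc g i) = List.ofFn g ++ [i] := by
  rw [List.ofFn_succ']
  rw [List.concat_eq_append]
  congr 1
  · congr 1
    funext j
    simp
  · simp

lemma extContr19_snoc {k : ℕ} (g : Fin k → Fin d) (i : Fin d)
    (x : ExteriorAlgebra ℝ (Fin d → ℝ)) :
    extContr19 (Fin.snoc g i) x = extContr19 g (ctr i x) := by
  rw [extContr19_eq, extContr19_eq, ofFn_snoc, extContrL, extContrL, List.foldr_append]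
  rfl

/-- moving a contraction innermost -/
lemma dkey {i : Fin d} {l : List (Fin d)} (h : i ∈ l) (x : ExteriorAlgebra ℝ (Fin d → ℝ)) :
    Dc (l.erase i) (ctr i x) = ((-1 : ℝ) ^ (l.idxOf i)) • Dc l x := by
  induction l generalizing x with
  | nil => simp at h
  | cons j l ih =>
    rcases eq_or_ne i j with rfl | hij
    · rw [List.erase_cons_head, List.idxOf_cons_self, pow_zero, one_smul, Dc_cons]
    · have h' : i ∈ l := by
        rcases List.mem_cons.mp h with h1 | h1
        · exact absurd h1 hij
        · exact h1
      rw [List.erase_cons_tail (by simp [hij.symm]), Dc_cons, List.idxOf_cons_ne _ hij.symm]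
      have hcomm : ctr j (ctr i x) = -(ctr i (ctr j x)) :=
        CliffordAlgebra.contractLeft_comm _ _ x
      rw [hcomm, Dc_neg, ih h' (ctr j x), Dc_cons, pow_succ]
      rw [← neg_smul]
      congr 1
      ring

/-- the equiv used to peel the innermost contraction -/
def snocEquiv (k : ℕ) : ((Fin k → Fin d) × Fin d) ≃ (Fin (k + 1) → Fin d) where
  toFun p := Fin.snoc p.1 p.2
  invFun f := (fun j => f j.castSucc, f (Fin.last k))
  left_inv p := by
    ext j
    · simp
    · simp
  right_inv f := by
    funext j
    rcases Fin.eq_castSucc_or_eq_last j with ⟨j', rfl⟩ | rfl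
    · simp
    · simp

lemma sum_lemma (ε : Fin d → ℝ) :
    ∀ (a : ℕ) (l : List (Fin d)), l.length = a → l.Nodup →
    ∀ x : ExteriorAlgebra ℝ (Fin d → ℝ),
    ∑ f : Fin a → Fin d, (∏ j, ε (f j)) • (extContr19 f (blade l) * extContr19 f x)
      = ((a.factorial : ℝ) * (l.map ε).prod) • Dc l x := by
  intro a
  induction a with
  | zero =>
    intro l hl _ x
    rw [List.length_eq_zero_iff] at hl
    subst hl
    have h1 : ∀ f : Fin 0 → Fin d,
        (∏ j, ε (f j)) • (extContr19 f (blade []) * extContr19 f x) = x := by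
      intro f
      have h2 : extContr19 f (blade ([] : List (Fin d))) = 1 := by
        rw [extContr19_eq, List.ofFn_zero]; rfl
      have h3 : extContr19 f x = x := by
        rw [extContr19_eq, List.ofFn_zero]; rfl
      rw [h2, h3, one_mul]
      simp
    rw [Finset.sum_congr rfl (fun f _ => h1 f)]
    rw [Finset.sum_const, Finset.card_univ]
    simp
  | succ a ih =>
    intro l hl hd x
    rw [← Equiv.sum_comp (snocEquiv (d := d) a)
      (fun f => (∏ j, ε (f j)) • (extContr19 f (blade l) * extContr19 f x))]
    rw [Fintype.sum_prod_type_right]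
    have hterm : ∀ (i : Fin d) (g : Fin a → Fin d),
        (∏ j, ε ((snocEquiv a (g, i)) j)) •
          (extContr19 ((snocEquiv (d := d) a) (g, i)) (blade l) *
           extContr19 ((snocEquiv (d := d) a) (g, i)) x)
        = (ε i * ∏ j, ε (g j)) • (extContr19 g (ctr i (blade l)) * extContr19 g (ctr i x)) := by
      intro i g
      have hsnoc : ((snocEquiv (d := d) a) (g, i) : Fin (a + 1) → Fin d) = Fin.snoc g i := rfl
      rw [hsnoc, extContr19_snoc, extContr19_snoc, Fin.prod_univ_castSucc]
      simp only [Fin.snoc_castSucc, Fin.snoc_last]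
      congr 1
      ring
    rw [Finset.sum_congr rfl (fun i _ => Finset.sum_congr rfl (fun g _ => hterm i g))]
    have hzero : ∀ i : Fin d, i ∉ l →
        (∑ g : Fin a → Fin d,
          (ε i * ∏ j, ε (g j)) • (extContr19 g (ctr i (blade l)) * extContr19 g (ctr i x))) = 0 := by
      intro i hi
      apply Finset.sum_eq_zero
      intro g _
      rw [ctr_blade_not_mem' hi, extContr19_eq, extContrL_zero, zero_mul, smul_zero]
    have hinner : ∀ i : Fin d, i ∈ l →
        (∑ g : Fin a → Fin d,
          (ε i * ∏ j, ε (g j)) • (extContr19 g (ctr i (blade l)) * extContr19 g (ctr i x)))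
        = ((a.factorial : ℝ) * (l.map ε).prod) • Dc l x := by
      intro i hi
      have hk : ctr i (blade l) = ((-1 : ℝ) ^ (l.idxOf i)) • blade (l.erase i) :=
        ctr_blade_mem hd hi
      have hlen : (l.erase i).length = a := by
        rw [List.length_erase_of_mem hi, hl]
        rfl
      have hstep1 : ∀ g : Fin a → Fin d,
          (ε i * ∏ j, ε (g j)) • (extContr19 g (ctr i (blade l)) * extContr19 g (ctr i x))
          = (ε i * (-1 : ℝ) ^ (l.idxOf i)) •
              ((∏ j, ε (g j)) •
                (extContr19 g (blade (l.erase i)) * extContr19 g (ctr i x))) := by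
        intro g
        rw [hk, extContr19_eq, extContrL_smul, ← extContr19_eq, smul_mul_assoc,
          smul_smul, smul_smul]
        congr 1
        ring
      rw [Finset.sum_congr rfl (fun g _ => hstep1 g), ← Finset.smul_sum,
        ih (l.erase i) hlen (hd.erase i) (ctr i x), dkey hi, smul_smul, smul_smul]
      congr 1
      have hm : ε i * ((l.erase i).map ε).prod = (l.map ε).prod :=
        List.prod_map_erase ε hi
      rw [← hm]
      generalize hgen : ((-1 : ℝ) ^ (l.idxOf i)) = s
      have hs2 : s * s = 1 := by rw [← hgen, ← mul_pow]; norm_num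
      linear_combination (ε i * (a.factorial : ℝ) * ((l.erase i).map ε).prod) * hs2
    rw [← Finset.sum_subset (Finset.subset_univ l.toFinset)
      (fun i _ hi => hzero i (by simpa using hi))]
    rw [Finset.sum_congr rfl (fun i hi => hinner i (List.mem_toFinset.mp hi))]
    rw [Finset.sum_const, List.toFinset_card_of_nodup hd, hl]
    rw [← Nat.cast_smul_eq_nsmul ℝ, smul_smul]
    congr 1
    rw [Nat.factorial_succ]
    push_cast
    ring

-- chunk 6: genProd on blades, span lemmas, assembly

lemma genProd19_blade (ε : Fin d → ℝ) {a : ℕ} {l : List (Fin d)} (hl : l.length = a)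
    (hd : l.Nodup) (y : ExteriorAlgebra ℝ (Fin d → ℝ)) :
    genProd19 ε a (blade l) y = ((l.map ε).prod) • Dc l y := by
  rw [genProd19, sum_lemma ε a l hl hd y, smul_smul, ← mul_assoc,
    inv_mul_cancel₀ (by exact_mod_cast (Nat.factorial_pos a).ne'), one_mul]

lemma genProd19_zero_left (ε : Fin d → ℝ) (k : ℕ) (y : ExteriorAlgebra ℝ (Fin d → ℝ)) :
    genProd19 ε k 0 y = 0 := by
  rw [genProd19]
  rw [Finset.sum_eq_zero (fun f _ => by
    rw [extContr19_eq, extContrL_zero, zero_mul, smul_zero])]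
  rw [smul_zero]

lemma genProd19_zero_right (ε : Fin d → ℝ) (k : ℕ) (y : ExteriorAlgebra ℝ (Fin d → ℝ)) :
    genProd19 ε k y 0 = 0 := by
  rw [genProd19]
  rw [Finset.sum_eq_zero (fun f _ => by
    rw [extContr19_eq (x := (0 : ExteriorAlgebra ℝ (Fin d → ℝ))), extContrL_zero, mul_zero,
      smul_zero])]
  rw [smul_zero]

lemma genProd19_add_left (ε : Fin d → ℝ) (k : ℕ) (x x' y : ExteriorAlgebra ℝ (Fin d → ℝ)) :
    genProd19 ε k (x + x') y = genProd19 ε k x y + genProd19 ε k x' y := by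
  rw [genProd19, genProd19, genProd19, ← smul_add, ← Finset.sum_add_distrib]
  congr 1
  refine Finset.sum_congr rfl fun f _ => ?_
  rw [extContr19_eq, extContrL_add, ← extContr19_eq, ← extContr19_eq, add_mul, smul_add]

lemma genProd19_smul_left (ε : Fin d → ℝ) (k : ℕ) (r : ℝ)
    (x y : ExteriorAlgebra ℝ (Fin d → ℝ)) :
    genProd19 ε k (r • x) y = r • genProd19 ε k x y := by
  have h : ∀ f : Fin k → Fin d, (∏ j, ε (f j)) • (extContr19 f (r • x) * extContr19 f y)
      = r • ((∏ j, ε (f j)) • (extContr19 f x * extContr19 f y)) := by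
    intro f
    rw [extContr19_eq, extContrL_smul, ← extContr19_eq, smul_mul_assoc, smul_comm]
  rw [genProd19, genProd19, Finset.sum_congr rfl (fun f _ => h f), ← Finset.smul_sum,
    smul_comm]

lemma genProd19_add_right (ε : Fin d → ℝ) (k : ℕ) (x y y' : ExteriorAlgebra ℝ (Fin d → ℝ)) :
    genProd19 ε k x (y + y') = genProd19 ε k x y + genProd19 ε k x y' := by
  rw [genProd19, genProd19, genProd19, ← smul_add, ← Finset.sum_add_distrib]
  congr 1
  refine Finset.sum_congr rfl fun f _ => ?_
  rw [extContr19_eq (x := y + y'), extContrL_add, ← extContr19_eq, ← extContr19_eq, mul_add,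
    smul_add]

lemma genProd19_smul_right (ε : Fin d → ℝ) (k : ℕ) (r : ℝ)
    (x y : ExteriorAlgebra ℝ (Fin d → ℝ)) :
    genProd19 ε k x (r • y) = r • genProd19 ε k x y := by
  have h : ∀ f : Fin k → Fin d, (∏ j, ε (f j)) • (extContr19 f x * extContr19 f (r • y))
      = r • ((∏ j, ε (f j)) • (extContr19 f x * extContr19 f y)) := by
    intro f
    rw [extContr19_eq (x := r • y), extContrL_smul, ← extContr19_eq, mul_smul_comm, smul_comm]
  rw [genProd19, genProd19, Finset.sum_congr rfl (fun f _ => h f), ← Finset.smul_sum,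
    smul_comm]

/-- the per-blade statement -/
lemma blade_case (ε : Fin d → ℝ) {a : ℕ} {l : List (Fin d)} (hl : l.length = a)
    (n : List (Fin d)) :
    genProd19 ε a (blade l) (kaHodge ε (blade n)) = kaHodge ε (blade n * blade l) := by
  by_cases hd : l.Nodup
  · rw [genProd19_blade ε hl hd, bridge ε l n, blade_append]
  · rw [blade_eq_zero_of_not_nodup hd, genProd19_zero_left, mul_zero, kaHodge_zero]

lemma e_eq_blade (i : Fin d) : e i = blade [i] := by simp [blade]

lemma mul_mem_bladeSpan {x y : ExteriorAlgebra ℝ (Fin d → ℝ)}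
    (hx : x ∈ Submodule.span ℝ (Set.range (blade (d := d))))
    (hy : y ∈ Submodule.span ℝ (Set.range (blade (d := d)))) :
    x * y ∈ Submodule.span ℝ (Set.range (blade (d := d))) := by
  induction hx using Submodule.span_induction generalizing y with
  | mem x hx =>
    obtain ⟨l, rfl⟩ := hx
    induction hy using Submodule.span_induction with
    | mem y hy =>
      obtain ⟨m, rfl⟩ := hy
      exact Submodule.subset_span ⟨l ++ m, blade_append l m⟩
    | zero => rw [mul_zero]; exact Submodule.zero_mem _
    | add u v _ _ hu hv => rw [mul_add]; exact Submodule.add_mem _ hu hv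
    | smul r u _ hu => rw [mul_smul_comm]; exact Submodule.smul_mem _ r hu
  | zero => rw [zero_mul]; exact Submodule.zero_mem _
  | add u v _ _ hu hv => rw [add_mul]; exact Submodule.add_mem _ (hu hy) (hv hy)
  | smul r u _ hu => rw [smul_mul_assoc]; exact Submodule.smul_mem _ r (hu hy)

lemma bladeSpanTop (x : ExteriorAlgebra ℝ (Fin d → ℝ)) :
    x ∈ Submodule.span ℝ (Set.range (blade (d := d))) := by
  induction x using CliffordAlgebra.induction with
  | algebraMap r =>
    rw [Algebra.algebraMap_eq_smul_one]
    exact Submodule.smul_mem _ r (Submodule.subset_span ⟨[], rfl⟩)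
  | ι v =>
    have hv : ExteriorAlgebra.ι ℝ v = ∑ i : Fin d, v i • e i := by
      conv_lhs => rw [← Finset.univ_sum_single v]
      rw [map_sum]
      refine Finset.sum_congr rfl fun i _ => ?_
      rw [e, ← map_smul]
      congr 1
      rw [← Pi.single_smul, smul_eq_mul, mul_one]
    rw [hv]
    exact Submodule.sum_mem _ fun i _ =>
      Submodule.smul_mem _ _ (Submodule.subset_span ⟨[i], by rw [← e_eq_blade]⟩)
  | mul u v hu hv => exact mul_mem_bladeSpan hu hv
  | add u v hu hv => exact Submodule.add_mem _ hu hv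

lemma e_mul_span {k : ℕ} (i : Fin d) {y : ExteriorAlgebra ℝ (Fin d → ℝ)}
    (hy : y ∈ Submodule.span ℝ (blade '' {l : List (Fin d) | l.length = k})) :
    e i * y ∈ Submodule.span ℝ (blade '' {l : List (Fin d) | l.length = k + 1}) := by
  induction hy using Submodule.span_induction with
  | mem y hy =>
    obtain ⟨l, hl, rfl⟩ := hy
    refine Submodule.subset_span ⟨i :: l, ?_, (blade_cons i l).symm⟩
    simp only [Set.mem_setOf_eq] at hl ⊢
    simp [hl]
  | zero => rw [mul_zero]; exact Submodule.zero_mem _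
  | add u v _ _ hu hv => rw [mul_add]; exact Submodule.add_mem _ hu hv
  | smul r u _ hu => rw [mul_smul_comm]; exact Submodule.smul_mem _ r hu

lemma listProd_mem_span : ∀ vs : List (Fin d → ℝ),
    (vs.map (ExteriorAlgebra.ι ℝ)).prod
      ∈ Submodule.span ℝ (blade '' {l : List (Fin d) | l.length = vs.length}) := by
  intro vs
  induction vs with
  | nil =>
    refine Submodule.subset_span ⟨[], ?_, rfl⟩
    simp
  | cons v vs ih =>
    rw [List.map_cons, List.prod_cons]
    have hv : ExteriorAlgebra.ι ℝ v = ∑ i : Fin d, v i • e i := by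
      conv_lhs => rw [← Finset.univ_sum_single v]
      rw [map_sum]
      refine Finset.sum_congr rfl fun i _ => ?_
      rw [e, ← map_smul]
      congr 1
      rw [← Pi.single_smul, smul_eq_mul, mul_one]
    rw [hv, Finset.sum_mul]
    refine Submodule.sum_mem _ fun i _ => ?_
    rw [smul_mul_assoc]
    exact Submodule.smul_mem _ _ (e_mul_span i ih)

lemma mem_bladeSpan_of_mem_power {a : ℕ} {α : ExteriorAlgebra ℝ (Fin d → ℝ)}
    (hα : α ∈ ⋀[ℝ]^a (Fin d → ℝ)) :
    α ∈ Submodule.span ℝ (blade '' {l : List (Fin d) | l.length = a}) := by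
  rw [← ExteriorAlgebra.ιMulti_span_fixedDegree] at hα
  refine Submodule.span_le.mpr ?_ hα
  rintro _ ⟨v, rfl⟩
  rw [ExteriorAlgebra.ιMulti_apply]
  have h1 : (List.ofFn fun i => ExteriorAlgebra.ι ℝ (v i))
      = (List.ofFn v).map (ExteriorAlgebra.ι ℝ) := by
    rw [List.map_ofFn]
    rfl
  rw [h1]
  have := listProd_mem_span (d := d) (List.ofFn v)
  rwa [List.length_ofFn] at this

end S19


/-- Let `(V, h)` be a quadratic vector space of dimension `d`, and
`α ∈ ∧^a V*`, `β ∈ ∧^b V*` with `a + b ≤ d`.  Then `α △_a (*β) = *(β ∧ α)`, where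
`△_a` is the `a`-th generalized product and `*` the Hodge star. -/
theorem genProd_hodge
    {d : ℕ} (ε : Fin d → ℝ) (hε : ∀ i, ε i = 1 ∨ ε i = -1)
    (a b : ℕ) (hab : a + b ≤ d) (α β : ExteriorAlgebra ℝ (Fin d → ℝ))
    (hα : α ∈ ⋀[ℝ]^a (Fin d → ℝ)) (hβ : β ∈ ⋀[ℝ]^b (Fin d → ℝ)) :
    genProd19 ε a α (kaHodge ε β) = kaHodge ε (β * α) := by
  clear hβ hab hε
  open S19 in
  -- step 1: per length-a blade, all β'
  have stepB : ∀ l : List (Fin d), l.length = a →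
      genProd19 ε a (blade l) (kaHodge ε β) = kaHodge ε (β * blade l) := by
    intro l hl
    induction bladeSpanTop β using Submodule.span_induction with
    | mem y hy =>
      obtain ⟨n, rfl⟩ := hy
      exact blade_case ε hl n
    | zero => rw [kaHodge_zero, genProd19_zero_right, zero_mul, kaHodge_zero]
    | add u v _ _ hu hv =>
      rw [kaHodge_add, genProd19_add_right, hu, hv, add_mul, kaHodge_add]
    | smul r u _ hu =>
      rw [kaHodge_smul, genProd19_smul_right, hu, smul_mul_assoc, kaHodge_smul]
  -- step 2: extend to α
  have hαs := mem_bladeSpan_of_mem_power hα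
  clear hα
  induction hαs using Submodule.span_induction with
  | mem x hx =>
    obtain ⟨l, hl, rfl⟩ := hx
    exact stepB l hl
  | zero => rw [genProd19_zero_left, mul_zero, kaHodge_zero]
  | add u v _ _ hu hv =>
    rw [genProd19_add_left, hu, hv, mul_add, kaHodge_add]
  | smul r u _ hu =>
    rw [genProd19_smul_left, hu, mul_smul_comm, kaHodge_smul]
end
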